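/- arXiv:hep-th/0303080 — 4 statements merged into one kernel-verified Lean document; each statement's English description precedes it below -/
import Mathlib

section
/- Let A and B be unital *-algebras over C = R(i), R an ordered ring, and let E be a B-A-bimodule equipped with an A-valued inner product ⟨·,·⟩: E × E → A which is C-linear in the second argument, satisfies ⟨x,y⟩ = ⟨y,x⟩*, ⟨x, y·A⟩ = ⟨x,y⟩A, is compatible with the B-action in the sense ⟨B·x, y⟩ = ⟨x, B*·y⟩, and is completely positive: for all n and x₁,…,xₙ ∈ E the matrix (⟨x_i,x_j⟩) ∈ M_n(A) is a positive element. Let (H, π) be a *-representation of A. Then on the tensor product K̃ = E ⊗_A H the formula ⟨x⊗φ, y⊗ψ⟩ := ⟨φ, π(⟨x,y⟩)ψ⟩ extends to a well-defined Hermitian sesquilinear form which is positive semidefinite, and the B-action B·(x⊗φ) = (B·x)⊗φ descends to the quotient K = K̃ / K̃^⊥ by the degeneracy space and yields a *-representation ρ of B on the pre-Hilbert space K. -/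
open Polynomial

/-- An *ordered ring*: positivity cone `P` with `P·P ⊆ P`, `P + P ⊆ P`,
`R = −P ∪ {0} ∪ P` disjointly. -/
def IsOrderedCone {R : Type*} [CommRing R] (P : Set R) : Prop :=
  (∀ a ∈ P, ∀ b ∈ P, a * b ∈ P) ∧
  (∀ a ∈ P, ∀ b ∈ P, a + b ∈ P) ∧
  (∀ a : R, a ∈ P ∨ a = 0 ∨ -a ∈ P) ∧
  (∀ a ∈ P, a ≠ (0 : R)) ∧
  (∀ a ∈ P, -a ∉ P)

noncomputable section

set_option maxRecDepth 8000

/-- The ring extension `C = R(i)` of `R` by a square root `i` of `-1`. -/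
abbrev Cplx (R : Type*) [CommRing R] := AdjoinRoot (X ^ 2 + 1 : R[X])

/-- The square root of `-1` in `C = R(i)`. -/
def Cplx.I (R : Type*) [CommRing R] : Cplx R := AdjoinRoot.root _

/-- Complex conjugation `z ↦ z̄` on `C = R(i)`: the ring endomorphism fixing `R`
and sending `i` to `-i`. -/
def Cplx.conj {R : Type*} [CommRing R] : Cplx R →+* Cplx R :=
  AdjoinRoot.lift (algebraMap R _) (-(AdjoinRoot.root _)) (by
    have h := AdjoinRoot.eval₂_root (X ^ 2 + 1 : R[X])
    rw [AdjoinRoot.algebraMap_eq]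
    simp only [eval₂_add, eval₂_pow, eval₂_X, eval₂_one, neg_sq] at h ⊢
    exact h)

/-- `z ∈ C = R(i)` is *nonnegative* (w.r.t. the cone `P` of `R`) if it lies in `R`
and is zero or positive there. -/
def Cplx.nonneg {R : Type*} [CommRing R] (P : Set R) (z : Cplx R) : Prop :=
  ∃ r : R, (r ∈ P ∨ r = 0) ∧ z = algebraMap R (Cplx R) r

/-- `z ∈ C = R(i)` is *positive* if it lies in `R` and is positive there. -/
def Cplx.pos {R : Type*} [CommRing R] (P : Set R) (z : Cplx R) : Prop :=
  ∃ r ∈ P, z = algebraMap R (Cplx R) r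

/-- `z ≤ w` in `C = R(i)` iff `w - z` is nonnegative. -/
def Cplx.le {R : Type*} [CommRing R] (P : Set R) (z w : Cplx R) : Prop :=
  Cplx.nonneg P (w - z)

universe u v v' w wH

/-- A `*`-algebra over `C = R(i)`: an associative unital `C`-algebra `A` equipped with
an involutive anti-linear anti-automorphism (a `*`-involution). -/
structure StarStructure (R : Type*) [CommRing R] (A : Type*) [Ring A]
    [Algebra (Cplx R) A] where
  star : A → A
  star_add : ∀ a b : A, star (a + b) = star a + star b
  star_mul : ∀ a b : A, star (a * b) = star b * star a
  star_star : ∀ a : A, star (star a) = a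
  star_smul : ∀ (z : Cplx R) (a : A), star (z • a) = Cplx.conj z • star a
  star_one : star (1 : A) = 1

/-- A `C`-linear functional `ω : A → C` is *positive* if `ω(a* a) ≥ 0` for all `a`. -/
def IsPosFunctional {R : Type*} [CommRing R] (P : Set R) {A : Type*} [Ring A]
    [Algebra (Cplx R) A] (S : StarStructure R A) (ω : A → Cplx R) : Prop :=
  (∀ a b : A, ω (a + b) = ω a + ω b) ∧
  (∀ (z : Cplx R) (a : A), ω (z • a) = z * ω a) ∧
  (∀ a : A, Cplx.nonneg P (ω (S.star a * a)))

/-- A *pre-Hilbert space* structure over `C = R(i)`: an inner product which is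
`C`-linear in the second argument, Hermitian, and positive definite. -/
structure PreInner (R : Type*) [CommRing R] (P : Set R) (H : Type*) [AddCommGroup H]
    [Module (Cplx R) H] where
  inner : H → H → Cplx R
  inner_add_right : ∀ φ ψ χ : H, inner φ (ψ + χ) = inner φ ψ + inner φ χ
  inner_smul_right : ∀ (z : Cplx R) (φ ψ : H), inner φ (z • ψ) = z * inner φ ψ
  inner_herm : ∀ φ ψ : H, inner φ ψ = Cplx.conj (inner ψ φ)
  inner_posdef : ∀ φ : H, φ ≠ 0 → Cplx.pos P (inner φ φ)

/-- A `*`-representation of a `*`-algebra `A` over `C = R(i)` on a pre-Hilbert space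
over `C`: a unital homomorphism into the adjointable operators `B(H)`. -/
structure StarRep (R : Type u) [CommRing R] (P : Set R) (A : Type v) [Ring A]
    [Algebra (Cplx R) A] (S : StarStructure R A) : Type (max u v (w + 1)) where
  carrier : Type w
  [grp : AddCommGroup carrier]
  [mod : Module (Cplx R) carrier]
  ip : PreInner R P carrier
  π : A → carrier → carrier
  π_add_vec : ∀ (a : A) (φ ψ : carrier), π a (φ + ψ) = π a φ + π a ψ
  π_smul_vec : ∀ (a : A) (z : Cplx R) (φ : carrier), π a (z • φ) = z • π a φ
  π_one : ∀ φ : carrier, π 1 φ = φ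
  π_add : ∀ (a b : A) (φ : carrier), π (a + b) φ = π a φ + π b φ
  π_smul : ∀ (z : Cplx R) (a : A) (φ : carrier), π (z • a) φ = z • π a φ
  π_mul : ∀ (a b : A) (φ : carrier), π (a * b) φ = π a (π b φ)
  π_star : ∀ (a : A) (φ ψ : carrier),
    ip.inner (π a φ) ψ = ip.inner φ (π (S.star a) ψ)

attribute [instance] StarRep.grp StarRep.mod


variable {R : Type*} [CommRing R] {A : Type*} [Ring A] [Algebra (Cplx R) A]

/-- The `*`-involution of the matrix `*`-algebra `M_m(A)`: `(M*)_{ij} = (M_{ji})*`. -/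
def matStar (S : StarStructure R A) {m : ℕ} (M : Matrix (Fin m) (Fin m) A) :
    Matrix (Fin m) (Fin m) A :=
  Matrix.of fun i j => S.star (M j i)

/-- A positive linear functional on the matrix `*`-algebra `M_m(A)`. -/
def IsPosMatFunctional (P : Set R) (S : StarStructure R A) {m : ℕ}
    (Ω : Matrix (Fin m) (Fin m) A → Cplx R) : Prop :=
  (∀ M N : Matrix (Fin m) (Fin m) A, Ω (M + N) = Ω M + Ω N) ∧
  (∀ (z : Cplx R) (M : Matrix (Fin m) (Fin m) A), Ω (z • M) = z * Ω M) ∧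
  (∀ M : Matrix (Fin m) (Fin m) A, Cplx.nonneg P (Ω (matStar S M * M)))

/-- A *positive element* of the matrix `*`-algebra `M_m(A)`: every positive linear
functional takes a nonnegative value on it. -/
def IsPosMatrix (P : Set R) (S : StarStructure R A) {m : ℕ}
    (M : Matrix (Fin m) (Fin m) A) : Prop :=
  ∀ Ω : Matrix (Fin m) (Fin m) A → Cplx R,
    IsPosMatFunctional P S Ω → Cplx.nonneg P (Ω M)


/-!
The form `⟨x ⊗ φ, y ⊗ ψ⟩ = ⟨φ, π⟨x, y⟩ ψ⟩` is built on the tensor product over `C`; the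
balancing over `A` is recovered in the quotient, since `x·a ⊗ φ - x ⊗ π(a)φ` lies in the
radical. For `ξ = ∑ xᵢ ⊗ φᵢ` the value `⟨ξ, ξ⟩` is the functional `N ↦ ∑ ⟨φᵢ, π(Nᵢⱼ)φⱼ⟩`
on `M_m(A)` evaluated at the positive matrix `(⟨xᵢ, xⱼ⟩)`, and this functional is positive
because it sends `N*N` to `∑ₖ ⟨∑ᵢ π(Nₖᵢ)φᵢ, ∑ⱼ π(Nₖⱼ)φⱼ⟩`. A degenerate Cauchy–Schwarz
argument shows that isotropic vectors lie in the radical, so the form is positive definite on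
the quotient by the radical. Finally `⟨b·x, y⟩ = ⟨x, b*·y⟩` makes `b ⊗ id` adjointable with
adjoint `b* ⊗ id`, so it preserves the radical and descends.
-/

theorem IsOrderedCone.mul_self_mem {P : Set R} (hP : IsOrderedCone P) {a : R} (ha : a ≠ 0) :
    a * a ∈ P := by
  rcases hP.2.2.1 a with h | h | h
  · exact hP.1 _ h _ h
  · exact absurd h ha
  · simpa using hP.1 _ h _ h

theorem IsOrderedCone.mul_self_add_mul_self_mem {P : Set R} (hP : IsOrderedCone P) {a b : R}
    (h : a ≠ 0 ∨ b ≠ 0) : a * a + b * b ∈ P := by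
  by_cases ha : a = 0
  · simpa [ha] using hP.mul_self_mem (h.resolve_left (not_not.mpr ha))
  by_cases hb : b = 0
  · simpa [hb] using hP.mul_self_mem ha
  exact hP.2.1 _ (hP.mul_self_mem ha) _ (hP.mul_self_mem hb)

namespace Cplx

open Polynomial

theorem conj_algebraMap (r : R) : conj (algebraMap R (Cplx R) r) = algebraMap R (Cplx R) r :=
  AdjoinRoot.lift_of _

theorem conj_I : conj (I R) = -I R :=
  AdjoinRoot.lift_root _

theorem I_mul_I : I R * I R = -1 := by
  have h : I R ^ 2 + 1 = 0 := by
    rw [I, ← AdjoinRoot.mk_X, ← map_pow, ← map_one (AdjoinRoot.mk _), ← map_add,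
      AdjoinRoot.mk_self]
  linear_combination h

instance [Subsingleton R] : Subsingleton (Cplx R) :=
  subsingleton_of_zero_eq_one <| by
    rw [← map_zero (algebraMap R (Cplx R)), ← map_one (algebraMap R (Cplx R)),
      Subsingleton.elim (0 : R) 1]

theorem monic_X_sq_add_one : (X ^ 2 + 1 : R[X]).Monic := by
  nontriviality R
  exact monic_X_pow_add (by simp)

theorem degree_X_sq_add_one [Nontrivial R] : (X ^ 2 + 1 : R[X]).degree = 2 := by
  compute_degree!

theorem algebraMap_add_mul_I (p q : R) :
    algebraMap R (Cplx R) p + algebraMap R (Cplx R) q * I R =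
      AdjoinRoot.mk _ (C p + C q * X) := by
  simp [I, AdjoinRoot.algebraMap_eq]

theorem exists_eq_algebraMap_add_mul_I (z : Cplx R) :
    ∃ p q : R, z = algebraMap R (Cplx R) p + algebraMap R (Cplx R) q * I R := by
  rcases subsingleton_or_nontrivial R with _ | _
  · exact ⟨0, 0, Subsingleton.elim _ _⟩
  obtain ⟨f, rfl⟩ := AdjoinRoot.mk_surjective z
  have hdeg : (f %ₘ (X ^ 2 + 1)).degree ≤ 1 := by
    have := degree_modByMonic_lt f monic_X_sq_add_one
    rw [degree_X_sq_add_one] at this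
    exact Order.le_of_lt_succ this
  refine ⟨(f %ₘ (X ^ 2 + 1)).coeff 0, (f %ₘ (X ^ 2 + 1)).coeff 1, ?_⟩
  rw [algebraMap_add_mul_I, add_comm (C _), ← eq_X_add_C_of_degree_le_one hdeg]
  conv_lhs => rw [← modByMonic_add_div f (X ^ 2 + 1)]
  rw [map_add, map_mul, AdjoinRoot.mk_self, zero_mul, add_zero]

theorem eq_zero_of_algebraMap_add_mul_I_eq_zero {p q : R}
    (h : algebraMap R (Cplx R) p + algebraMap R (Cplx R) q * I R = 0) : p = 0 ∧ q = 0 := by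
  nontriviality R
  have hdeg : (C p + C q * X).degree < (X ^ 2 + 1 : R[X]).degree := by
    rw [degree_X_sq_add_one, add_comm (C p)]
    exact degree_linear_le.trans_lt (by norm_num)
  have hpoly : C p + C q * X = 0 := by
    rw [← (modByMonic_eq_self_iff monic_X_sq_add_one).mpr hdeg,
      ← AdjoinRoot.modByMonicHom_mk monic_X_sq_add_one, ← algebraMap_add_mul_I, h, map_zero]
  constructor
  · simpa using congr_arg (coeff · 0) hpoly
  · simpa using congr_arg (coeff · 1) hpoly

theorem algebraMap_injective : Function.Injective (algebraMap R (Cplx R)) :=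
  (injective_iff_map_eq_zero _).mpr fun r hr =>
    (eq_zero_of_algebraMap_add_mul_I_eq_zero (q := 0)
      (by rw [map_zero, zero_mul, add_zero, hr])).1

variable {P : Set R}

theorem exists_mem_mul_conj_eq (hP : IsOrderedCone P) {z : Cplx R} (hz : z ≠ 0) :
    ∃ r ∈ P, z * conj z = algebraMap R (Cplx R) r := by
  obtain ⟨p, q, rfl⟩ := exists_eq_algebraMap_add_mul_I z
  refine ⟨p * p + q * q, hP.mul_self_add_mul_self_mem ?_, ?_⟩
  · by_contra! h
    simp [h.1, h.2] at hz
  · simp only [map_add, map_mul, conj_algebraMap, conj_I]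
    linear_combination (-(algebraMap R (Cplx R) q * algebraMap R (Cplx R) q)) * I_mul_I (R := R)

theorem not_nonneg_neg_algebraMap (hP : IsOrderedCone P) {r : R} (hr : r ∈ P) :
    ¬ Cplx.nonneg P (-algebraMap R (Cplx R) r) := by
  rintro ⟨s, hs, hrs⟩
  have hs' : s = -r := algebraMap_injective (by rw [← hrs, map_neg])
  rcases hs with hs | hs
  · exact hP.2.2.2.2 r hr (hs' ▸ hs)
  · exact hP.2.2.2.1 r hr (neg_eq_zero.mp (hs' ▸ hs))

theorem nonneg_sum (hP : IsOrderedCone P) {ι : Type*} (s : Finset ι) {f : ι → Cplx R}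
    (h : ∀ i ∈ s, Cplx.nonneg P (f i)) : Cplx.nonneg P (∑ i ∈ s, f i) := by
  classical
  induction s using Finset.induction_on with
  | empty => exact ⟨0, Or.inr rfl, by simp⟩
  | insert i s hi ih =>
    obtain ⟨a, ha, hfa⟩ := h i (s.mem_insert_self i)
    obtain ⟨b, hb, hfb⟩ := ih fun j hj => h j (s.mem_insert_of_mem hj)
    refine ⟨a + b, ?_, by rw [Finset.sum_insert hi, hfa, hfb, map_add]⟩
    rcases ha with ha | rfl
    · rcases hb with hb | rfl
      · exact Or.inl (hP.2.1 _ ha _ hb)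
      · simpa using Or.inl ha
    · simpa using hb

end Cplx

open TensorProduct in
theorem TensorProduct.exists_fin_sum_tmul {K M N : Type*} [CommSemiring K] [AddCommMonoid M]
    [Module K M] [AddCommMonoid N] [Module K N] (ξ : M ⊗[K] N) :
    ∃ (m : ℕ) (x : Fin m → M) (y : Fin m → N), ξ = ∑ i, x i ⊗ₜ y i := by
  obtain ⟨s, rfl⟩ := exists_finset ξ
  refine ⟨s.card, fun i => (s.equivFin.symm i).1.1, fun i => (s.equivFin.symm i).1.2, ?_⟩
  rw [← Finset.sum_coe_sort s]
  exact (Equiv.sum_comp s.equivFin.symm fun p => p.1.1 ⊗ₜ p.1.2).symm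

section QuotientByRadical

variable {P : Set R} {V : Type*} [AddCommGroup V] [Module (Cplx R) V]
  {Q : V →ₛₗ[Cplx.conj (R := R)] V →ₗ[Cplx R] Cplx R}

theorem LinearMap.IsSymm.mem_ker_of_apply_self_eq_zero (hP : IsOrderedCone P) (hQ : Q.IsSymm)
    (hpos : ∀ v, Cplx.nonneg P (Q v v)) {ξ : V} (hξ : Q ξ ξ = 0) : ξ ∈ LinearMap.ker Q := by
  refine LinearMap.mem_ker.mpr (LinearMap.ext fun η => ?_)
  have hd : Q η ξ = Cplx.conj (Q ξ η) := (hQ.eq ξ η).symm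
  by_contra hd0
  obtain ⟨N, hN, hdN⟩ := Cplx.exists_mem_mul_conj_eq hP hd0
  obtain ⟨σ, hσ, hησ⟩ := hpos η
  have hr : N * N * (σ + (N + N)) ∈ P := by
    refine hP.1 _ (hP.1 _ hN _ hN) _ ?_
    rcases hσ with hσ | rfl
    · exact hP.2.1 _ hσ _ (hP.2.1 _ hN _ hN)
    · simpa using hP.2.1 _ hN _ hN
  -- with `d = Q ξ η`, `N = d d̄` and `σ = Q η η`, the form is `-N²(σ + 2N)` at `N η - (σ + N) d ξ`
  apply Cplx.not_nonneg_neg_algebraMap hP hr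
  convert hpos (algebraMap R (Cplx R) N • η -
    ((algebraMap R (Cplx R) σ + algebraMap R (Cplx R) N) * Q ξ η) • ξ) using 1
  simp only [map_sub, map_smulₛₗ, LinearMap.sub_apply, LinearMap.smul_apply, smul_eq_mul,
    map_mul, Cplx.conj_algebraMap, hξ, hd, hησ, map_add]
  linear_combination
    (2 * algebraMap R (Cplx R) N * (algebraMap R (Cplx R) σ + algebraMap R (Cplx R) N)) * hdN

variable (Q) in
def quotKerForm (hQ : Q.IsSymm) :
    V ⧸ LinearMap.ker Q →ₛₗ[Cplx.conj (R := R)] V ⧸ LinearMap.ker Q →ₗ[Cplx R] Cplx R :=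
  ((LinearMap.ker Q).liftQ ((LinearMap.ker Q).liftQ Q le_rfl).flip fun η hη =>
    LinearMap.ext fun k => Submodule.Quotient.induction_on _ k fun ξ => by
      simp [← hQ.eq η ξ, LinearMap.mem_ker.mp hη]).flip

variable (Q) in
def PreInner.ofQuotKer (hP : IsOrderedCone P) (hQ : Q.IsSymm)
    (hpos : ∀ v, Cplx.nonneg P (Q v v)) : PreInner R P (V ⧸ LinearMap.ker Q) where
  inner k l := quotKerForm Q hQ k l
  inner_add_right k _ _ := map_add _ _ _
  inner_smul_right z k l := map_smul _ z l
  inner_herm k l := by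
    induction k using Submodule.Quotient.induction_on
    induction l using Submodule.Quotient.induction_on
    exact (hQ.eq _ _).symm
  inner_posdef k hk := by
    induction k using Submodule.Quotient.induction_on with | H ξ => ?_
    obtain ⟨r, hr | rfl, hξ⟩ := hpos ξ
    · exact ⟨r, hr, hξ⟩
    · rw [map_zero] at hξ
      exact absurd ((Submodule.Quotient.mk_eq_zero _).mpr
        (hQ.mem_ker_of_apply_self_eq_zero hP hpos hξ)) hk

theorem ker_le_comap_ker_of_adjoint {f g : Module.End (Cplx R) V}
    (hfg : ∀ ξ η, Q (f ξ) η = Q ξ (g η)) : LinearMap.ker Q ≤ (LinearMap.ker Q).comap f :=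
  fun ξ hξ => LinearMap.mem_ker.mpr <| LinearMap.ext fun η => by
    rw [hfg, LinearMap.mem_ker.mp hξ, LinearMap.zero_apply, LinearMap.zero_apply]

variable (Q) in
def StarRep.ofQuotKer {B : Type*} [Ring B] [Algebra (Cplx R) B] (hP : IsOrderedCone P)
    (SB : StarStructure R B) (hQ : Q.IsSymm) (hpos : ∀ v, Cplx.nonneg P (Q v v))
    (ρ : B →ₐ[Cplx R] Module.End (Cplx R) V)
    (hρ : ∀ b ξ η, Q (ρ b ξ) η = Q ξ (ρ (SB.star b) η)) : StarRep R P B SB where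
  carrier := V ⧸ LinearMap.ker Q
  ip := PreInner.ofQuotKer Q hP hQ hpos
  π b := (LinearMap.ker Q).mapQ _ (ρ b) (ker_le_comap_ker_of_adjoint (hρ b))
  π_add_vec b := map_add _
  π_smul_vec b := map_smul _
  π_one k := by
    induction k using Submodule.Quotient.induction_on
    simp
  π_add b c k := by
    induction k using Submodule.Quotient.induction_on
    simp
  π_smul z b k := by
    induction k using Submodule.Quotient.induction_on
    simp
  π_mul b c k := by
    induction k using Submodule.Quotient.induction_on
    simp
  π_star b k l := by
    induction k using Submodule.Quotient.induction_on
    induction l using Submodule.Quotient.induction_on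
    exact hρ _ _ _

end QuotientByRadical

section Bundling

variable {P : Set R} {S : StarStructure R A} {E : Type*} [AddCommGroup E] [Module (Cplx R) E]

def PreInner.toSesq (ip : PreInner R P E) : E →ₛₗ[Cplx.conj (R := R)] E →ₗ[Cplx R] Cplx R :=
  LinearMap.mk₂'ₛₗ Cplx.conj (RingHom.id _) ip.inner
    (fun φ ψ χ => by
      rw [ip.inner_herm, ip.inner_add_right, map_add, ← ip.inner_herm, ← ip.inner_herm])
    (fun z φ χ => by
      rw [ip.inner_herm, ip.inner_smul_right, map_mul, ← ip.inner_herm, smul_eq_mul])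
    ip.inner_add_right ip.inner_smul_right

theorem PreInner.toSesq_apply (ip : PreInner R P E) (φ ψ : E) : ip.toSesq φ ψ = ip.inner φ ψ :=
  rfl

theorem PreInner.nonneg_inner_self (ip : PreInner R P E) (φ : E) :
    Cplx.nonneg P (ip.inner φ φ) := by
  by_cases hφ : φ = 0
  · exact ⟨0, Or.inr rfl, by simp [hφ, ← ip.toSesq_apply]⟩
  · obtain ⟨r, hr, h⟩ := ip.inner_posdef φ hφ
    exact ⟨r, Or.inl hr, h⟩

def StarStructure.sesqOfHermitian (S : StarStructure R A) (f : E → E → A)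
    (hadd : ∀ x y y', f x (y + y') = f x y + f x y')
    (hsmul : ∀ (z : Cplx R) x y, f x (z • y) = z • f x y)
    (hherm : ∀ x y, f x y = S.star (f y x)) : E →ₛₗ[Cplx.conj (R := R)] E →ₗ[Cplx R] A :=
  LinearMap.mk₂'ₛₗ Cplx.conj (RingHom.id _) f
    (fun x x' y => by rw [hherm, hadd, S.star_add, ← hherm, ← hherm])
    (fun z x y => by rw [hherm, hsmul, S.star_smul, ← hherm])
    hadd hsmul

def StarRep.toAlgHom (ρ : StarRep R P A S) : A →ₐ[Cplx R] Module.End (Cplx R) ρ.carrier where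
  toFun a := { toFun := ρ.π a, map_add' := ρ.π_add_vec a, map_smul' := ρ.π_smul_vec a }
  map_one' := LinearMap.ext ρ.π_one
  map_mul' a b := LinearMap.ext (ρ.π_mul a b)
  map_zero' := LinearMap.ext fun φ => by simpa using ρ.π_add 0 0 φ
  map_add' a b := LinearMap.ext (ρ.π_add a b)
  commutes' z := LinearMap.ext fun φ => by
    rw [Algebra.algebraMap_eq_smul_one]
    exact (ρ.π_smul z 1 φ).trans (congrArg _ (ρ.π_one φ))

theorem StarRep.toAlgHom_apply (ρ : StarRep R P A S) (a : A) (φ : ρ.carrier) :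
    ρ.toAlgHom a φ = ρ.π a φ :=
  rfl

def algHomOfAction {B : Type*} [Ring B] [Algebra (Cplx R) B] (act : B → E → E)
    (hadd : ∀ b x y, act b (x + y) = act b x + act b y)
    (hsmul : ∀ (z : Cplx R) b x, act b (z • x) = z • act b x)
    (hadd' : ∀ b c x, act (b + c) x = act b x + act c x)
    (hmul : ∀ b c x, act (b * c) x = act b (act c x)) (hone : ∀ x, act 1 x = x)
    (hsmul' : ∀ (z : Cplx R) b x, act (z • b) x = z • act b x) :
    B →ₐ[Cplx R] Module.End (Cplx R) E where
  toFun b := { toFun := act b, map_add' := hadd b, map_smul' := (hsmul · b) }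
  map_one' := LinearMap.ext hone
  map_mul' b c := LinearMap.ext (hmul b c)
  map_zero' := LinearMap.ext fun x => by simpa using hadd' 0 0 x
  map_add' b c := LinearMap.ext (hadd' b c)
  commutes' z := LinearMap.ext fun x => by
    rw [Algebra.algebraMap_eq_smul_one]
    exact (hsmul' z 1 x).trans (congrArg _ (hone x))

end Bundling

section InducedForm

variable {P : Set R} {S : StarStructure R A}

theorem StarRep.isPosMatFunctional_sum_inner (hP : IsOrderedCone P) (ρ : StarRep R P A S)
    {m : ℕ} (φ : Fin m → ρ.carrier) :
    IsPosMatFunctional P S fun N => ∑ i, ∑ j, ρ.ip.inner (φ i) (ρ.π (N i j) (φ j)) := by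
  simp only [← ρ.ip.toSesq_apply, ← ρ.toAlgHom_apply]
  refine ⟨fun M N => ?_, fun z M => ?_, fun M => ?_⟩
  · simp only [Matrix.add_apply, map_add, LinearMap.add_apply, Finset.sum_add_distrib]
  · simp only [Matrix.smul_apply, map_smul, LinearMap.smul_apply, smul_eq_mul, Finset.mul_sum]
  · have hstar (a : A) (χ ψ : ρ.carrier) :
        ρ.ip.toSesq χ (ρ.toAlgHom (S.star a) ψ) = ρ.ip.toSesq (ρ.toAlgHom a χ) ψ :=
      (ρ.π_star a χ ψ).symm
    have hsq : ∑ i, ∑ j, ρ.ip.toSesq (φ i) (ρ.toAlgHom ((matStar S M * M) i j) (φ j)) =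
        ∑ k, ρ.ip.toSesq (∑ i, ρ.toAlgHom (M k i) (φ i)) (∑ j, ρ.toAlgHom (M k j) (φ j)) := by
      simp only [Matrix.mul_apply, matStar, Matrix.of_apply, map_sum, map_mul,
        LinearMap.sum_apply, Module.End.mul_apply, hstar]
      exact ((Finset.sum_congr rfl fun i _ => Finset.sum_comm).trans Finset.sum_comm).trans
        (Finset.sum_congr rfl fun k _ => Finset.sum_comm)
    dsimp only
    rw [hsq]
    exact Cplx.nonneg_sum hP _ fun k _ => ρ.ip.nonneg_inner_self _

theorem StarRep.nonneg_sum_inner (hP : IsOrderedCone P) (ρ : StarRep R P A S) {m : ℕ}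
    {M : Matrix (Fin m) (Fin m) A} (hM : IsPosMatrix P S M) (φ : Fin m → ρ.carrier) :
    Cplx.nonneg P (∑ i, ∑ j, ρ.ip.inner (φ i) (ρ.π (M i j) (φ j))) :=
  hM _ (ρ.isPosMatFunctional_sum_inner hP φ)

variable {E : Type*} [AddCommGroup E] [Module (Cplx R) E]

open TensorProduct

def inducedForm (ρ : StarRep R P A S) (ip : E →ₛₗ[Cplx.conj (R := R)] E →ₗ[Cplx R] A) :
    E ⊗[Cplx R] ρ.carrier →ₛₗ[Cplx.conj (R := R)] E ⊗[Cplx R] ρ.carrier →ₗ[Cplx R] Cplx R :=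
  lift <| LinearMap.mk₂'ₛₗ Cplx.conj Cplx.conj
    (fun x φ => lift <| (ρ.toAlgHom.toLinearMap ∘ₗ ip x).compr₂ (ρ.ip.toSesq φ))
    (fun x x' φ => ext' fun y ψ => by simp)
    (fun z x φ => ext' fun y ψ => by simp)
    (fun x φ φ' => ext' fun y ψ => by simp)
    (fun z x φ => ext' fun y ψ => by simp)

@[simp]
theorem inducedForm_tmul (ρ : StarRep R P A S) (ip : E →ₛₗ[Cplx.conj (R := R)] E →ₗ[Cplx R] A)
    (x y : E) (φ ψ : ρ.carrier) :
    inducedForm ρ ip (x ⊗ₜ φ) (y ⊗ₜ ψ) = ρ.ip.inner φ (ρ.π (ip x y) ψ) :=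
  rfl

variable {ρ : StarRep R P A S} {ip : E →ₛₗ[Cplx.conj (R := R)] E →ₗ[Cplx R] A}

theorem inducedForm_isSymm (hip : ∀ x y, ip x y = S.star (ip y x)) :
    (inducedForm ρ ip).IsSymm := by
  refine LinearMap.isSymm_def.mpr fun ξ η => ?_
  induction ξ using TensorProduct.induction_on with
  | zero => simp
  | add ξ ξ' hξ hξ' => simp [hξ, hξ']
  | tmul x φ =>
    induction η using TensorProduct.induction_on with
    | zero => simp
    | add η η' hη hη' => simp [hη, hη']
    | tmul y ψ =>
      rw [inducedForm_tmul, inducedForm_tmul, hip y x, ← ρ.π_star, ρ.ip.inner_herm (ρ.π _ ψ)]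

theorem inducedForm_nonneg (hP : IsOrderedCone P)
    (hcp : ∀ (m : ℕ) (x : Fin m → E), IsPosMatrix P S (Matrix.of fun i j => ip (x i) (x j)))
    (ξ : E ⊗[Cplx R] ρ.carrier) : Cplx.nonneg P (inducedForm ρ ip ξ ξ) := by
  obtain ⟨m, x, φ, rfl⟩ := TensorProduct.exists_fin_sum_tmul ξ
  simp only [map_sum, LinearMap.sum_apply, inducedForm_tmul]
  rw [Finset.sum_comm]
  simpa using ρ.nonneg_sum_inner hP (hcp m x) φ

theorem inducedForm_rTensor {f g : Module.End (Cplx R) E}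
    (hfg : ∀ x y, ip (f x) y = ip x (g y)) (ξ η : E ⊗[Cplx R] ρ.carrier) :
    inducedForm ρ ip (f.rTensor _ ξ) η = inducedForm ρ ip ξ (g.rTensor _ η) := by
  have : (inducedForm ρ ip).comp (f.rTensor _) = (inducedForm ρ ip).compl₂ (g.rTensor _) :=
    ext' fun x φ => ext' fun y ψ => by simp [hfg]
  exact LinearMap.congr_fun₂ this ξ η

theorem tmul_sub_tmul_mem_ker_inducedForm (hip : ∀ x y, ip x y = S.star (ip y x)) {x x' : E}
    {a : A} (hx : ∀ y, ip y x' = ip y x * a) (φ : ρ.carrier) :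
    x' ⊗ₜ φ - x ⊗ₜ ρ.π a φ ∈ LinearMap.ker (inducedForm ρ ip) := by
  refine LinearMap.mem_ker.mpr (ext' fun y ψ => ?_)
  rw [map_sub, LinearMap.sub_apply, inducedForm_tmul, inducedForm_tmul, hip, hx, S.star_mul,
    ← hip, ρ.π_mul, ← ρ.π_star, LinearMap.zero_apply, sub_self]

end InducedForm

theorem rieffel_induction_general
    (R : Type u) [CommRing R] (P : Set R) (hP : IsOrderedCone P)
    (A : Type v) [Ring A] [Algebra (Cplx R) A] (SA : StarStructure R A)
    (B : Type v') [Ring B] [Algebra (Cplx R) B] (SB : StarStructure R B)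
    (E : Type w) [AddCommGroup E] [Module (Cplx R) E]
    -- right `A`-module structure on `E`
    (ra : E → A → E)
    -- left `B`-module structure on `E`
    (lb : B → E → E)
    (hlb_add : ∀ (b : B) (x y : E), lb b (x + y) = lb b x + lb b y)
    (hlb_add' : ∀ (b c : B) (x : E), lb (b + c) x = lb b x + lb c x)
    (hlb_mul : ∀ (b c : B) (x : E), lb (b * c) x = lb b (lb c x))
    (hlb_one : ∀ x : E, lb 1 x = x)
    (hlb_smul : ∀ (z : Cplx R) (b : B) (x : E), lb b (z • x) = z • lb b x)
    (hlb_smul' : ∀ (z : Cplx R) (b : B) (x : E), lb (z • b) x = z • lb b x)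
    -- the `A`-valued inner product on `E`
    (ipE : E → E → A)
    (hip_add : ∀ x y z' : E, ipE x (y + z') = ipE x y + ipE x z')
    (hip_smul : ∀ (z : Cplx R) (x y : E), ipE x (z • y) = z • ipE x y)
    (hip_herm : ∀ x y : E, ipE x y = SA.star (ipE y x))
    (hip_ra : ∀ (x y : E) (a : A), ipE x (ra y a) = ipE x y * a)
    (hip_lb : ∀ (b : B) (x y : E), ipE (lb b x) y = ipE x (lb (SB.star b) y))
    -- complete positivity of the inner product
    (hip_cp : ∀ (m : ℕ) (x : Fin m → E),
      IsPosMatrix P SA (Matrix.of fun i j => ipE (x i) (x j)))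
    -- a `*`-representation `(H, π)` of `A`
    (ρA : StarRep.{u, v, wH} R P A SA) :
    -- the induced inner product is positive semidefinite on `K̃ = E ⊗_A H`
    (∀ (m : ℕ) (x : Fin m → E) (φ : Fin m → ρA.carrier),
      Cplx.nonneg P (∑ i, ∑ j, ρA.ip.inner (φ i) (ρA.π (ipE (x i) (x j)) (φ j)))) ∧
    -- and it descends to a `*`-representation of `B` on `K = K̃ / K̃^⊥`
    ∃ (ρB : StarRep.{u, v', max w wH} R P B SB)
      (T : E → ρA.carrier → ρB.carrier),
      (∀ (x y : E) (φ : ρA.carrier), T (x + y) φ = T x φ + T y φ) ∧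
      (∀ (x : E) (φ ψ : ρA.carrier), T x (φ + ψ) = T x φ + T x ψ) ∧
      (∀ (z : Cplx R) (x : E) (φ : ρA.carrier), T (z • x) φ = z • T x φ) ∧
      (∀ (z : Cplx R) (x : E) (φ : ρA.carrier), T x (z • φ) = z • T x φ) ∧
      (∀ (x : E) (a : A) (φ : ρA.carrier), T (ra x a) φ = T x (ρA.π a φ)) ∧
      (∀ (x y : E) (φ ψ : ρA.carrier),
        ρB.ip.inner (T x φ) (T y ψ) = ρA.ip.inner φ (ρA.π (ipE x y) ψ)) ∧
      (∀ (b : B) (x : E) (φ : ρA.carrier), ρB.π b (T x φ) = T (lb b x) φ) ∧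
      (∀ k : ρB.carrier, ∃ (m : ℕ) (x : Fin m → E) (φ : Fin m → ρA.carrier),
        k = ∑ i, T (x i) (φ i)) := by
  let ip := SA.sesqOfHermitian ipE hip_add hip_smul hip_herm
  have hip : ∀ x y, ip x y = SA.star (ip y x) := hip_herm
  let Q := inducedForm ρA ip
  let ρ := (Module.End.rTensorAlgHom (Cplx R) E ρA.carrier).comp
    (algHomOfAction lb hlb_add hlb_smul hlb_add' hlb_mul hlb_one hlb_smul')
  let T := (TensorProduct.mk (Cplx R) E ρA.carrier).compr₂ (LinearMap.ker Q).mkQ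
  have hρ (b : B) (ξ η) : Q (ρ b ξ) η = Q ξ (ρ (SB.star b) η) :=
    inducedForm_rTensor (fun x y => hip_lb b x y) ξ η
  refine ⟨fun m x φ => ρA.nonneg_sum_inner hP (hip_cp m x) φ,
    StarRep.ofQuotKer Q hP SB (inducedForm_isSymm hip) (inducedForm_nonneg hP hip_cp) ρ hρ,
    fun x φ => T x φ, T.map_add₂, fun x => map_add (T x), T.map_smul₂,
    fun z x => map_smul (T x) z, fun x a φ => ?_, fun x y φ ψ => rfl, fun b x φ => rfl,
    fun k => ?_⟩
  · exact (Submodule.Quotient.eq _).mpr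
      (tmul_sub_tmul_mem_ker_inducedForm hip (fun y => hip_ra y x a) φ)
  · obtain ⟨ξ, rfl⟩ := Submodule.Quotient.mk_surjective _ k
    obtain ⟨m, x, φ, rfl⟩ := TensorProduct.exists_fin_sum_tmul ξ
    exact ⟨m, x, φ, map_sum (LinearMap.ker Q).mkQ _ _⟩

/-- Rieffel induction.  Let `A`, `B` be unital `*`-algebras over
`C = R(i)` and `E` a `B`-`A`-bimodule with an `A`-valued, completely positive inner
product `⟨·,·⟩ : E × E → A`, compatible with the `B`-action.  Let `(H, π)` be a
`*`-representation of `A`.  Then on `K̃ = E ⊗_A H` the formula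
`⟨x ⊗ φ, y ⊗ ψ⟩ := ⟨φ, π(⟨x,y⟩)ψ⟩` extends to a well-defined Hermitian sesquilinear
form which is positive semidefinite, and the `B`-action `b · (x ⊗ φ) = (b·x) ⊗ φ`
descends to the quotient `K = K̃ / K̃^⊥` by the degeneracy space and yields a
`*`-representation `ρ` of `B` on the pre-Hilbert space `K`.  (The pre-Hilbert space
`K` is presented below by the balanced bilinear map `T : E × H → K` with
`T(x, φ) = [x ⊗ φ]`, which has total image and implements the inner product.) -/
theorem rieffel_induction
    (R : Type u) [CommRing R] (P : Set R) (hP : IsOrderedCone P)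
    (A : Type v) [Ring A] [Algebra (Cplx R) A] (SA : StarStructure R A)
    (B : Type v') [Ring B] [Algebra (Cplx R) B] (SB : StarStructure R B)
    (E : Type w) [AddCommGroup E] [Module (Cplx R) E]
    -- right `A`-module structure on `E`
    (ra : E → A → E)
    (hra_add : ∀ (x y : E) (a : A), ra (x + y) a = ra x a + ra y a)
    (hra_add' : ∀ (x : E) (a b : A), ra x (a + b) = ra x a + ra x b)
    (hra_mul : ∀ (x : E) (a b : A), ra (ra x a) b = ra x (a * b))
    (hra_one : ∀ x : E, ra x 1 = x)
    (hra_smul : ∀ (z : Cplx R) (x : E) (a : A), ra (z • x) a = z • ra x a)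
    (hra_smul' : ∀ (z : Cplx R) (x : E) (a : A), ra x (z • a) = z • ra x a)
    -- left `B`-module structure on `E`
    (lb : B → E → E)
    (hlb_add : ∀ (b : B) (x y : E), lb b (x + y) = lb b x + lb b y)
    (hlb_add' : ∀ (b c : B) (x : E), lb (b + c) x = lb b x + lb c x)
    (hlb_mul : ∀ (b c : B) (x : E), lb (b * c) x = lb b (lb c x))
    (hlb_one : ∀ x : E, lb 1 x = x)
    (hlb_smul : ∀ (z : Cplx R) (b : B) (x : E), lb b (z • x) = z • lb b x)
    (hlb_smul' : ∀ (z : Cplx R) (b : B) (x : E), lb (z • b) x = z • lb b x)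
    -- `E` is a bimodule
    (hbimod : ∀ (b : B) (x : E) (a : A), lb b (ra x a) = ra (lb b x) a)
    -- the `A`-valued inner product on `E`
    (ipE : E → E → A)
    (hip_add : ∀ x y z' : E, ipE x (y + z') = ipE x y + ipE x z')
    (hip_smul : ∀ (z : Cplx R) (x y : E), ipE x (z • y) = z • ipE x y)
    (hip_herm : ∀ x y : E, ipE x y = SA.star (ipE y x))
    (hip_ra : ∀ (x y : E) (a : A), ipE x (ra y a) = ipE x y * a)
    (hip_lb : ∀ (b : B) (x y : E), ipE (lb b x) y = ipE x (lb (SB.star b) y))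
    -- complete positivity of the inner product
    (hip_cp : ∀ (m : ℕ) (x : Fin m → E),
      IsPosMatrix P SA (Matrix.of fun i j => ipE (x i) (x j)))
    -- a `*`-representation `(H, π)` of `A`
    (ρA : StarRep.{u, v, wH} R P A SA) :
    -- the induced inner product is positive semidefinite on `K̃ = E ⊗_A H`
    (∀ (m : ℕ) (x : Fin m → E) (φ : Fin m → ρA.carrier),
      Cplx.nonneg P (∑ i, ∑ j, ρA.ip.inner (φ i) (ρA.π (ipE (x i) (x j)) (φ j)))) ∧
    -- and it descends to a `*`-representation of `B` on `K = K̃ / K̃^⊥`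
    ∃ (ρB : StarRep.{u, v', max w wH} R P B SB)
      (T : E → ρA.carrier → ρB.carrier),
      (∀ (x y : E) (φ : ρA.carrier), T (x + y) φ = T x φ + T y φ) ∧
      (∀ (x : E) (φ ψ : ρA.carrier), T x (φ + ψ) = T x φ + T x ψ) ∧
      (∀ (z : Cplx R) (x : E) (φ : ρA.carrier), T (z • x) φ = z • T x φ) ∧
      (∀ (z : Cplx R) (x : E) (φ : ρA.carrier), T x (z • φ) = z • T x φ) ∧
      (∀ (x : E) (a : A) (φ : ρA.carrier), T (ra x a) φ = T x (ρA.π a φ)) ∧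
      (∀ (x y : E) (φ ψ : ρA.carrier),
        ρB.ip.inner (T x φ) (T y ψ) = ρA.ip.inner φ (ρA.π (ipE x y) ψ)) ∧
      (∀ (b : B) (x : E) (φ : ρA.carrier), ρB.π b (T x φ) = T (lb b x) φ) ∧
      (∀ k : ρB.carrier, ∃ (m : ℕ) (x : Fin m → E) (φ : Fin m → ρA.carrier),
        k = ∑ i, T (x i) (φ i)) :=
  rieffel_induction_general R P hP A SA B SB E ra lb hlb_add hlb_add' hlb_mul hlb_one hlb_smul
    hlb_smul' ipE hip_add hip_smul hip_herm hip_ra hip_lb hip_cp ρA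
end
end

section
/- Let A be an associative unital algebra over a commutative ring containing the rationals, and let D₁,…,D_n, E¹,…,Eⁿ: A → A be derivations which pairwise commute (all D's and E's commute with each other as maps). Then the product a ⋆ b := μ ∘ e^{λ Σ_i D_i ⊗ E^i}(a ⊗ b) = Σ_{r≥0} (λ^r / r!) Σ_{i₁,…,i_r} μ(D_{i₁}⋯D_{i_r} a ⊗ E^{i₁}⋯E^{i_r} b), where μ denotes the undeformed multiplication, is an associative unital product on A[[λ]] deforming the product of A, i.e. a ⋆ b = ab + O(λ). -/
/-!
Write `B_r(a, b) = ∑_{|v| = r} D_v a · E_v b` for words `v` of length `r`, so that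
`a ⋆ b = ∑_r λ^r/r! · B_r(a, b)`. A product `∑_r λ^r P_r`, extended `λ`-bilinearly, is associative
once its cochains satisfy `∑_{r+s=n} P_s(P_r(a, b), c) = ∑_{r+s=n} P_r(a, P_s(b, c))` for all `n`.
For `P_r = B_r/r!` this follows from the iterated Leibniz rule: `B_s(ab, c)` distributes the
letters of each word between `a` and `b` with binomial multiplicities (the `E`'s must commute for
the letters to regroup), and dually for `B_r(a, bc)`. After the operators are sorted with the
commutation relations, both sides become `∑_{i+j+k=n} T_{ijk}(a, b, c)/(i! j! k!)`, where `T_{ijk}`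
(`tridiff` below) joins `a` to `b` by words of length `i`, `a` to `c` by words of length `j`, and
`b` to `c` by words of length `k`. Unitality holds because derivations kill `1`.
-/

noncomputable section

/-- Composition of a list of operators. -/
def comps {A : Type*} (l : List (A → A)) : A → A :=
  l.foldr (· ∘ ·) id

/-- Gerstenhaber's associative deformation by commuting derivations:
`a ⋆ b = μ ∘ e^{λ Σ_i D_i ⊗ E^i} (a ⊗ b)`, extended `λ`-bilinearly to `A[[λ]]`,
i.e. the `λ^n`-coefficient of `f ⋆ g` is
`Σ_{r+p+q=n} (1/r!) Σ_{i₁,…,i_r} (D_{i₁}⋯D_{i_r} f_p) · (E^{i₁}⋯E^{i_r} g_q)`. -/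
def starCD (K : Type*) [CommRing K] [Algebra ℚ K] (A : Type*) [Ring A] [Algebra K A]
    (N : ℕ) (D E : Fin N → A → A) (f g : PowerSeries A) : PowerSeries A :=
  PowerSeries.mk fun n =>
    ∑ rm ∈ Finset.HasAntidiagonal.antidiagonal n, ∑ pq ∈ Finset.HasAntidiagonal.antidiagonal rm.2,
      algebraMap ℚ K (1 / rm.1.factorial) •
        ∑ v : Fin rm.1 → Fin N,
          comps ((List.ofFn v).map D) (PowerSeries.coeff pq.1 f) *
            comps ((List.ofFn v).map E) (PowerSeries.coeff pq.2 g)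

open Finset PowerSeries

section Reindex

variable {M : Type*} [AddCommMonoid M]

theorem sum_antidiagonal_antidiagonal_assoc (n : ℕ) (F : ℕ → ℕ → ℕ → M) :
    ∑ x ∈ antidiagonal n, ∑ y ∈ antidiagonal x.2, F x.1 y.1 y.2 =
      ∑ x ∈ antidiagonal n, ∑ y ∈ antidiagonal x.1, F y.1 y.2 x.2 := by
  simp only [sum_sigma']
  apply sum_nbij' (fun ⟨⟨i, _⟩, ⟨j, k⟩⟩ ↦ ⟨(i + j, k), (i, j)⟩)
    (fun ⟨⟨_, k⟩, ⟨i, j⟩⟩ ↦ ⟨(i, j + k), (j, k)⟩) <;> aesop (add simp [add_assoc])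

/- The index sets of `(f ⋆ g) ⋆ h` and `f ⋆ (g ⋆ h)`, with cochain degrees `r, s` and series
degrees `p, q, t`, regrouped so that `r + s` is summed innermost. -/
theorem sum_antidiagonal_nested_left (n : ℕ) (F : ℕ → ℕ → ℕ → ℕ → ℕ → M) :
    ∑ x ∈ antidiagonal n, ∑ y ∈ antidiagonal x.2, ∑ z ∈ antidiagonal y.1,
        ∑ w ∈ antidiagonal z.2, F z.1 x.1 w.1 w.2 y.2 =
      ∑ x ∈ antidiagonal n, ∑ y ∈ antidiagonal x.2, ∑ z ∈ antidiagonal y.2,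
        ∑ w ∈ antidiagonal x.1, F w.1 w.2 y.1 z.1 z.2 := by
  simp only [sum_sigma']
  apply sum_nbij'
    (fun ⟨⟨s, _⟩, ⟨_, t⟩, ⟨r, _⟩, ⟨p, q⟩⟩ ↦ ⟨(r + s, p + (q + t)), (p, q + t), (q, t), (r, s)⟩)
    (fun ⟨_, ⟨p, _⟩, ⟨q, t⟩, ⟨r, s⟩⟩ ↦ ⟨(s, r + p + q + t), (r + p + q, t), (r, p + q), (p, q)⟩)
  all_goals aesop (add simp [add_assoc, add_left_comm])

theorem sum_antidiagonal_nested_right (n : ℕ) (F : ℕ → ℕ → ℕ → ℕ → ℕ → M) :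
    ∑ x ∈ antidiagonal n, ∑ y ∈ antidiagonal x.2, ∑ z ∈ antidiagonal y.2,
        ∑ w ∈ antidiagonal z.2, F x.1 z.1 y.1 w.1 w.2 =
      ∑ x ∈ antidiagonal n, ∑ y ∈ antidiagonal x.2, ∑ z ∈ antidiagonal y.2,
        ∑ w ∈ antidiagonal x.1, F w.1 w.2 y.1 z.1 z.2 := by
  simp only [sum_sigma']
  apply sum_nbij'
    (fun ⟨⟨r, _⟩, ⟨p, _⟩, ⟨s, _⟩, ⟨q, t⟩⟩ ↦ ⟨(r + s, p + (q + t)), (p, q + t), (q, t), (r, s)⟩)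
    (fun ⟨_, ⟨p, _⟩, ⟨q, t⟩, ⟨r, s⟩⟩ ↦ ⟨(r, p + s + q + t), (p, s + q + t), (s, q + t), (q, t)⟩)
  all_goals aesop (add simp [add_assoc, add_left_comm])

end Reindex

section Deformation

variable {R A : Type*} [CommSemiring R] [Semiring A] [Module R A]

def deformedMul (P : ℕ → A →ₗ[R] A →ₗ[R] A) (f g : A⟦X⟧) : A⟦X⟧ :=
  mk fun n => ∑ x ∈ antidiagonal n, ∑ y ∈ antidiagonal x.2, P x.1 (coeff y.1 f) (coeff y.2 g)

variable {P : ℕ → A →ₗ[R] A →ₗ[R] A}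

theorem deformedMul_assoc
    (hP : ∀ n a b c, ∑ x ∈ antidiagonal n, P x.2 (P x.1 a b) c =
      ∑ x ∈ antidiagonal n, P x.1 a (P x.2 b c))
    (f g h : A⟦X⟧) :
    deformedMul P (deformedMul P f g) h = deformedMul P f (deformedMul P g h) := by
  ext n
  simp only [deformedMul, coeff_mk, map_sum, LinearMap.sum_apply]
  rw [sum_antidiagonal_nested_left n fun r s p q t ↦ P s (P r (coeff p f) (coeff q g)) (coeff t h),
    sum_antidiagonal_nested_right n fun r s p q t ↦ P r (coeff p f) (P s (coeff q g) (coeff t h))]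
  simp only [hP]

theorem one_deformedMul (h0 : ∀ a b, P 0 a b = a * b) (h1 : ∀ r b, P (r + 1) 1 b = 0) (f : A⟦X⟧) :
    deformedMul P 1 f = f := by
  ext n
  have hP1 : ∀ r p b, P r (coeff p 1) b = if r = 0 ∧ p = 0 then b else 0 := by
    rintro (_ | r) (_ | p) b <;> simp [coeff_one, h0, h1]
  simp only [deformedMul, coeff_mk, hP1]
  rw [sum_eq_single (0, n), sum_eq_single (0, n)]
  all_goals aesop

theorem deformedMul_one (h0 : ∀ a b, P 0 a b = a * b) (h1 : ∀ r a, P (r + 1) a 1 = 0) (f : A⟦X⟧) :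
    deformedMul P f 1 = f := by
  ext n
  have hP1 : ∀ r a q, P r a (coeff q 1) = if r = 0 ∧ q = 0 then a else 0 := by
    rintro (_ | r) a (_ | q) <;> simp [coeff_one, h0, h1]
  simp only [deformedMul, coeff_mk, hP1]
  rw [sum_eq_single (0, n), sum_eq_single (n, 0)]
  all_goals aesop

theorem coeff_zero_deformedMul (h0 : ∀ a b, P 0 a b = a * b) (f g : A⟦X⟧) :
    coeff 0 (deformedMul P f g) = coeff 0 f * coeff 0 g := by
  simp [deformedMul, h0]

end Deformation

section Words

variable {M ι : Type*} [Monoid M]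

def wordProd (d : ι → M) {r : ℕ} (v : Fin r → ι) : M :=
  ((List.ofFn v).map d).prod

@[simp]
theorem wordProd_zero (d : ι → M) (v : Fin 0 → ι) : wordProd d v = 1 := rfl

theorem wordProd_snoc (d : ι → M) {r : ℕ} (v : Fin r → ι) (i : ι) :
    wordProd d (Fin.snoc v i) = wordProd d v * d i := by
  rw [wordProd, List.ofFn_succ']
  simp [wordProd]

theorem Commute.wordProd_left {d : ι → M} {x : M} (h : ∀ i, Commute (d i) x) {r : ℕ}
    (u : Fin r → ι) : Commute (wordProd d u) x :=
  Commute.list_prod_left _ _ fun _ hy ↦ by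
    obtain ⟨i, -, rfl⟩ := List.mem_map.1 hy
    exact h i

theorem Commute.wordProd_wordProd {d e : ι → M} (h : ∀ i j, Commute (d i) (e j)) {r s : ℕ}
    (u : Fin r → ι) (v : Fin s → ι) : Commute (wordProd d u) (wordProd e v) :=
  wordProd_left (fun i ↦ (wordProd_left (fun j ↦ (h i j).symm) v).symm) u

theorem sum_fun_fin_succ {N : Type*} [AddCommMonoid N] [Fintype ι] {r : ℕ}
    (F : (Fin (r + 1) → ι) → N) :
    ∑ v, F v = ∑ i, ∑ v : Fin r → ι, F (Fin.snoc v i) := by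
  rw [← (Fin.snocEquiv fun _ ↦ ι).sum_comp, Fintype.sum_prod_type]
  rfl

end Words

theorem comps_map_coe {K A ι : Type*} [Semiring K] [AddCommMonoid A] [Module K A]
    (d : ι → Module.End K A) (l : List ι) :
    comps (l.map fun i ↦ ⇑(d i)) = ⇑(l.map d).prod := by
  induction l with
  | nil => rfl
  | cons i l ih =>
    rw [List.map_cons, List.map_cons, List.prod_cons, Module.End.coe_mul, ← ih]
    rfl

theorem Commute.apply_comm {K A : Type*} [Semiring K] [AddCommMonoid A] [Module K A]
    {f g : Module.End K A} (h : Commute f g) (a : A) : f (g a) = g (f a) :=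
  LinearMap.congr_fun h.eq a

section Bidifferential

variable {K A ι : Type*} [CommSemiring K] [Semiring A] [Algebra K A] [Fintype ι]
  (d e : ι → Module.End K A)

def bidiff (r : ℕ) : A →ₗ[K] A →ₗ[K] A :=
  ∑ v : Fin r → ι, (LinearMap.mul K A).compl₁₂ (wordProd d v) (wordProd e v)

theorem bidiff_apply (r : ℕ) (a b : A) :
    bidiff d e r a b = ∑ v : Fin r → ι, wordProd d v a * wordProd e v b := by
  simp [bidiff]

theorem bidiff_zero_apply (a b : A) : bidiff d e 0 a b = a * b := by
  simp [bidiff_apply]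

theorem bidiff_succ_apply (r : ℕ) (a b : A) :
    bidiff d e (r + 1) a b = ∑ i, bidiff d e r (d i a) (e i b) := by
  simp [bidiff_apply, sum_fun_fin_succ, wordProd_snoc]

variable {d e}

theorem bidiff_mul_left (hd : ∀ i a b, d i (a * b) = d i a * b + a * d i b)
    (hee : ∀ i j, Commute (e i) (e j)) (s : ℕ) (a b c : A) :
    bidiff d e s (a * b) c = ∑ x ∈ antidiagonal s, s.choose x.1 •
      ∑ y : Fin x.1 → ι, wordProd d y a * bidiff d e x.2 b (wordProd e y c) := by
  induction s generalizing a b c with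
  | zero => simp [bidiff_zero_apply, mul_assoc]
  | succ s ih =>
    rw [bidiff_succ_apply, sum_antidiagonal_choose_succ_nsmul
      (fun j k ↦ ∑ y : Fin j → ι, wordProd d y a * bidiff d e k b (wordProd e y c))]
    simp only [hd, map_add, LinearMap.add_apply, ih, sum_add_distrib]
    refine (add_comm _ _).trans (congrArg₂ (· + ·) ?_ ?_)
    · rw [sum_comm]
      refine sum_congr rfl fun x _ ↦ ?_
      rw [← smul_sum, sum_comm]
      congr 1
      refine sum_congr rfl fun y _ ↦ ?_
      rw [bidiff_succ_apply, mul_sum]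
      refine sum_congr rfl fun i _ ↦ ?_
      rw [(Commute.wordProd_left (fun j ↦ hee j i) y).apply_comm]
    · rw [sum_comm]
      refine sum_congr rfl fun x hx ↦ ?_
      rw [Nat.choose_symm_of_eq_add (mem_antidiagonal.1 hx).symm, ← smul_sum, sum_fun_fin_succ]
      simp [wordProd_snoc]

theorem bidiff_mul_right (he : ∀ i a b, e i (a * b) = e i a * b + a * e i b)
    (hdd : ∀ i j, Commute (d i) (d j)) (s : ℕ) (a b c : A) :
    bidiff d e s a (b * c) = ∑ x ∈ antidiagonal s, s.choose x.1 •
      ∑ y : Fin x.2 → ι, bidiff d e x.1 (wordProd d y a) b * wordProd e y c := by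
  induction s generalizing a b c with
  | zero => simp [bidiff_zero_apply, mul_assoc]
  | succ s ih =>
    rw [bidiff_succ_apply, sum_antidiagonal_choose_succ_nsmul (M := A)
      (fun j k ↦ ∑ y : Fin k → ι, bidiff d e j (wordProd d y a) b * wordProd e y c)]
    simp only [he, map_add, ih, sum_add_distrib]
    refine (add_comm _ _).trans (congrArg₂ (· + ·) ?_ ?_)
    · rw [sum_comm]
      refine sum_congr rfl fun x _ ↦ ?_
      rw [← smul_sum, sum_fun_fin_succ]
      simp [wordProd_snoc]
    · rw [sum_comm]
      refine sum_congr rfl fun x hx ↦ ?_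
      rw [Nat.choose_symm_of_eq_add (mem_antidiagonal.1 hx).symm, ← smul_sum, sum_comm]
      congr 1
      refine sum_congr rfl fun y _ ↦ ?_
      rw [bidiff_succ_apply, sum_mul]
      refine sum_congr rfl fun i _ ↦ ?_
      rw [(Commute.wordProd_left (fun j ↦ hdd j i) y).apply_comm]

variable (d e) in
def tridiff (i j k : ℕ) (a b c : A) : A :=
  ∑ x : Fin i → ι, ∑ y : Fin j → ι, ∑ z : Fin k → ι,
    wordProd d x (wordProd d y a) * wordProd e x (wordProd d z b) * wordProd e y (wordProd e z c)

theorem bidiff_bidiff_left (hd : ∀ i a b, d i (a * b) = d i a * b + a * d i b)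
    (hdd : ∀ i j, Commute (d i) (d j)) (hee : ∀ i j, Commute (e i) (e j))
    (hde : ∀ i j, Commute (d i) (e j)) (r s : ℕ) (a b c : A) :
    bidiff d e s (bidiff d e r a b) c =
      ∑ x ∈ antidiagonal s, s.choose x.1 • tridiff d e r x.1 x.2 a b c := by
  simp only [bidiff_apply d e r, map_sum, LinearMap.sum_apply, bidiff_mul_left hd hee]
  rw [sum_comm]
  refine sum_congr rfl fun x _ ↦ ?_
  rw [← smul_sum]
  congr 1
  simp only [tridiff, bidiff_apply, mul_sum]
  refine sum_congr rfl fun w _ ↦ sum_congr rfl fun y _ ↦ sum_congr rfl fun z _ ↦ ?_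
  rw [(Commute.wordProd_wordProd hdd y w).apply_comm,
    (Commute.wordProd_wordProd hde z w).apply_comm,
    (Commute.wordProd_wordProd hee z y).apply_comm, mul_assoc]

theorem bidiff_bidiff_right (he : ∀ i a b, e i (a * b) = e i a * b + a * e i b)
    (hdd : ∀ i j, Commute (d i) (d j)) (r s : ℕ) (a b c : A) :
    bidiff d e r a (bidiff d e s b c) =
      ∑ x ∈ antidiagonal r, r.choose x.1 • tridiff d e x.1 x.2 s a b c := by
  simp only [bidiff_apply d e s, map_sum, bidiff_mul_right he hdd]
  rw [sum_comm]
  refine sum_congr rfl fun x _ ↦ ?_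
  rw [← smul_sum]
  congr 1
  simp only [tridiff, bidiff_apply, sum_mul]
  rw [sum_comm]
  exact (sum_congr rfl fun y _ ↦ sum_comm).trans sum_comm

end Bidifferential

theorem algebraMap_one_div_factorial_smul_choose_nsmul {K M : Type*} [CommSemiring K]
    [Algebra ℚ K] [AddCommMonoid M] [Module K M] (j k : ℕ) (x : M) :
    algebraMap ℚ K (1 / (j + k).factorial) • (j + k).choose j • x =
      algebraMap ℚ K (1 / j.factorial) • algebraMap ℚ K (1 / k.factorial) • x := by
  rw [← Nat.cast_smul_eq_nsmul K, smul_smul, smul_smul, ← map_natCast (algebraMap ℚ K),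
    ← map_mul, ← map_mul, Nat.cast_add_choose]
  congr 2
  field_simp

section Exponential

variable {K A ι : Type*} [CommSemiring K] [Algebra ℚ K] [Semiring A] [Algebra K A] [Fintype ι]
  (d e : ι → Module.End K A)

def expBidiff (r : ℕ) : A →ₗ[K] A →ₗ[K] A :=
  algebraMap ℚ K (1 / r.factorial) • bidiff d e r

theorem expBidiff_zero_apply (a b : A) : expBidiff d e 0 a b = a * b := by
  simp [expBidiff, bidiff_zero_apply]

variable {d e}

theorem expBidiff_succ_one_left (hd : ∀ i, d i 1 = 0) (r : ℕ) (b : A) :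
    expBidiff d e (r + 1) 1 b = 0 := by
  simp [expBidiff, bidiff_succ_apply, hd]

theorem expBidiff_succ_one_right (he : ∀ i, e i 1 = 0) (r : ℕ) (a : A) :
    expBidiff d e (r + 1) a 1 = 0 := by
  simp [expBidiff, bidiff_succ_apply, he]

theorem expBidiff_expBidiff_left (hd : ∀ i a b, d i (a * b) = d i a * b + a * d i b)
    (hdd : ∀ i j, Commute (d i) (d j)) (hee : ∀ i j, Commute (e i) (e j))
    (hde : ∀ i j, Commute (d i) (e j)) (r s : ℕ) (a b c : A) :
    expBidiff d e s (expBidiff d e r a b) c = ∑ x ∈ antidiagonal s,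
      algebraMap ℚ K (1 / r.factorial) • algebraMap ℚ K (1 / x.1.factorial) •
        algebraMap ℚ K (1 / x.2.factorial) • tridiff d e r x.1 x.2 a b c := by
  simp only [expBidiff, LinearMap.smul_apply, map_smul, bidiff_bidiff_left hd hdd hee hde,
    smul_sum]
  refine sum_congr rfl fun x hx ↦ ?_
  obtain rfl := mem_antidiagonal.1 hx
  rw [algebraMap_one_div_factorial_smul_choose_nsmul]

theorem expBidiff_expBidiff_right (he : ∀ i a b, e i (a * b) = e i a * b + a * e i b)
    (hdd : ∀ i j, Commute (d i) (d j)) (r s : ℕ) (a b c : A) :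
    expBidiff d e r a (expBidiff d e s b c) = ∑ x ∈ antidiagonal r,
      algebraMap ℚ K (1 / x.1.factorial) • algebraMap ℚ K (1 / x.2.factorial) •
        algebraMap ℚ K (1 / s.factorial) • tridiff d e x.1 x.2 s a b c := by
  simp only [expBidiff, LinearMap.smul_apply, map_smul, bidiff_bidiff_right he hdd, smul_sum]
  refine sum_congr rfl fun x hx ↦ ?_
  obtain rfl := mem_antidiagonal.1 hx
  rw [algebraMap_one_div_factorial_smul_choose_nsmul, smul_comm (algebraMap ℚ K _),
    smul_comm (algebraMap ℚ K (1 / s.factorial))]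

theorem sum_expBidiff_assoc (hd : ∀ i a b, d i (a * b) = d i a * b + a * d i b)
    (he : ∀ i a b, e i (a * b) = e i a * b + a * e i b)
    (hdd : ∀ i j, Commute (d i) (d j)) (hee : ∀ i j, Commute (e i) (e j))
    (hde : ∀ i j, Commute (d i) (e j)) (n : ℕ) (a b c : A) :
    ∑ x ∈ antidiagonal n, expBidiff d e x.2 (expBidiff d e x.1 a b) c =
      ∑ x ∈ antidiagonal n, expBidiff d e x.1 a (expBidiff d e x.2 b c) := by
  simp only [expBidiff_expBidiff_left hd hdd hee hde, expBidiff_expBidiff_right he hdd]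
  exact sum_antidiagonal_antidiagonal_assoc n fun i j k ↦ algebraMap ℚ K (1 / i.factorial) •
    algebraMap ℚ K (1 / j.factorial) • algebraMap ℚ K (1 / k.factorial) • tridiff d e i j k a b c

end Exponential

theorem starCD_eq_deformedMul {K A : Type*} [CommRing K] [Algebra ℚ K] [Ring A] [Algebra K A]
    {N : ℕ} (d e : Fin N → Module.End K A) :
    starCD K A N (fun i ↦ d i) (fun i ↦ e i) = deformedMul (expBidiff d e) := by
  ext f g n
  simp only [starCD, comps_map_coe]
  simp [deformedMul, expBidiff, bidiff_apply, wordProd]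

theorem Module.End.map_one_eq_zero_of_leibniz {K A : Type*} [Semiring K] [Ring A]
    [Module K A] (φ : Module.End K A) (h : ∀ a b, φ (a * b) = φ a * b + a * φ b) : φ 1 = 0 := by
  simpa using h 1 1

/-- Let `A` be an associative unital algebra over a commutative ring
`K ⊇ ℚ` and let `D₁,…,D_N, E¹,…,E^N : A → A` be pairwise commuting derivations.  Then
`a ⋆ b := μ ∘ e^{λ Σ_i D_i ⊗ E^i}(a ⊗ b)` is an associative unital product on
`A[[λ]]` deforming the product of `A`, i.e. `a ⋆ b = ab + O(λ)`. -/
theorem commuting_derivations_deformation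
    (K : Type*) [CommRing K] [Algebra ℚ K]
    (A : Type*) [Ring A] [Algebra K A]
    (N : ℕ) (D E : Fin N → A → A)
    -- the `D i` and `E i` are `K`-linear derivations
    (hD_add : ∀ (i : Fin N) (a b : A), D i (a + b) = D i a + D i b)
    (hD_smul : ∀ (i : Fin N) (c : K) (a : A), D i (c • a) = c • D i a)
    (hD_leibniz : ∀ (i : Fin N) (a b : A), D i (a * b) = D i a * b + a * D i b)
    (hE_add : ∀ (i : Fin N) (a b : A), E i (a + b) = E i a + E i b)
    (hE_smul : ∀ (i : Fin N) (c : K) (a : A), E i (c • a) = c • E i a)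
    (hE_leibniz : ∀ (i : Fin N) (a b : A), E i (a * b) = E i a * b + a * E i b)
    -- all the `D`'s and `E`'s pairwise commute
    (hDD : ∀ (i j : Fin N) (a : A), D i (D j a) = D j (D i a))
    (hEE : ∀ (i j : Fin N) (a : A), E i (E j a) = E j (E i a))
    (hDE : ∀ (i j : Fin N) (a : A), D i (E j a) = E j (D i a)) :
    -- `⋆` is associative,
    (∀ f g h : PowerSeries A,
      starCD K A N D E (starCD K A N D E f g) h
        = starCD K A N D E f (starCD K A N D E g h)) ∧
    -- unital,
    (∀ f : PowerSeries A, starCD K A N D E 1 f = f) ∧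
    (∀ f : PowerSeries A, starCD K A N D E f 1 = f) ∧
    -- and deforms the product of `A`: `f ⋆ g = fg + O(λ)`.
    (∀ f g : PowerSeries A,
      PowerSeries.coeff 0 (starCD K A N D E f g)
        = PowerSeries.coeff 0 f * PowerSeries.coeff 0 g) := by
  obtain ⟨d, rfl⟩ : ∃ d : Fin N → Module.End K A, (fun i ↦ ⇑(d i)) = D :=
    ⟨fun i ↦ ⟨⟨D i, hD_add i⟩, hD_smul i⟩, rfl⟩
  obtain ⟨e, rfl⟩ : ∃ e : Fin N → Module.End K A, (fun i ↦ ⇑(e i)) = E :=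
    ⟨fun i ↦ ⟨⟨E i, hE_add i⟩, hE_smul i⟩, rfl⟩
  have hdd : ∀ i j, Commute (d i) (d j) := fun i j ↦ LinearMap.ext (hDD i j)
  have hee : ∀ i j, Commute (e i) (e j) := fun i j ↦ LinearMap.ext (hEE i j)
  have hde : ∀ i j, Commute (d i) (e j) := fun i j ↦ LinearMap.ext (hDE i j)
  have hd1 : ∀ i, d i 1 = 0 := fun i ↦ (d i).map_one_eq_zero_of_leibniz (hD_leibniz i)
  have he1 : ∀ i, e i 1 = 0 := fun i ↦ (e i).map_one_eq_zero_of_leibniz (hE_leibniz i)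
  rw [starCD_eq_deformedMul]
  exact ⟨deformedMul_assoc (sum_expBidiff_assoc hD_leibniz hE_leibniz hdd hee hde),
    one_deformedMul (expBidiff_zero_apply d e) (expBidiff_succ_one_left hd1),
    deformedMul_one (expBidiff_zero_apply d e) (expBidiff_succ_one_right he1),
    coeff_zero_deformedMul (expBidiff_zero_apply d e)⟩
end
end

section
/- Let ⋆_W be the Weyl (Moyal) star product on C^∞(ℝ²)[[λ]], f ⋆_W g = Σ_{r≥0} (1/r!)(λ/2i)^r Σ_{s=0}^r binom(r,s)(−1)^{r−s} (∂^r f/∂q^s∂p^{r−s})(∂^r g/∂q^{r−s}∂p^s), and let H(q,p) = (q² + p²)/2 be the Hamiltonian of the harmonic oscillator. Then δ(conj(H) ⋆_W H) = (conj(H) ⋆_W H)(0,0) = −λ²/4, which is a negative element of ℝ[[λ]]; hence the evaluation functional δ at the origin is not a positive linear functional for ⋆_W. -/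
noncomputable section

/-- Complex-valued functions on the phase space `ℝ²` with coordinates `(q, p)`. -/
abbrev Fn := ℝ × ℝ → ℂ

/-- The partial derivative `∂/∂q`. -/
def dq (f : Fn) : Fn := fun x => fderiv ℝ f x (1, 0)

/-- The partial derivative `∂/∂p`. -/
def dp (f : Fn) : Fn := fun x => fderiv ℝ f x (0, 1)

/-- A formal power series in `λ` with coefficients in `C^∞(ℝ²)` (complex valued). -/
abbrev FS := ℕ → Fn

/-- A formal series all of whose coefficients are smooth functions,
i.e. an element of `C^∞(ℝ²)[[λ]]`. -/
def SmoothFS (f : FS) : Prop := ∀ n, ContDiff ℝ (⊤ : ℕ∞) (f n)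

/-- Scalar multiplication of `ℂ[[λ]]` on `C^∞(ℝ²)[[λ]]` (Cauchy product). -/
def smulFS (c : ℕ → ℂ) (f : FS) : FS :=
  fun n => ∑ ab ∈ Finset.HasAntidiagonal.antidiagonal n, c ab.1 • f ab.2

/-- The unit `1 ∈ C^∞(ℝ²)[[λ]]`. -/
def oneFS : FS := fun n => if n = 0 then (fun _ => 1) else 0

/-- The canonical Poisson bracket `{f, g} = ∂_q f ∂_p g − ∂_p f ∂_q g` on `ℝ²`. -/
def pb (f g : Fn) : Fn := fun x => dq f x * dp g x - dp f x * dq g x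

/-- The bidifferential operators of the Weyl (Moyal) star product:
`C_r^W(f,g) = (1/r!)(1/2i)^r Σ_{s=0}^r binom(r,s)(−1)^{r−s}
(∂^r f/∂q^s∂p^{r−s})(∂^r g/∂q^{r−s}∂p^s)`. -/
def CrW (r : ℕ) (f g : Fn) : Fn := fun x =>
  (r.factorial : ℂ)⁻¹ * (2 * Complex.I)⁻¹ ^ r *
    ∑ s ∈ Finset.range (r + 1),
      (r.choose s : ℂ) * (-1) ^ (r - s) *
        (dq^[s] (dp^[r - s] f) x) * (dq^[r - s] (dp^[s] g) x)

/-- The Weyl (Moyal) star product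
`f ⋆_W g = Σ_{r≥0} (1/r!)(λ/2i)^r Σ_{s=0}^r binom(r,s)(−1)^{r−s}
(∂^r f/∂q^s∂p^{r−s})(∂^r g/∂q^{r−s}∂p^s)` on `C^∞(ℝ²)[[λ]]`. -/
def starW (f g : FS) : FS := fun n =>
  ∑ rm ∈ Finset.HasAntidiagonal.antidiagonal n, ∑ pq ∈ Finset.HasAntidiagonal.antidiagonal rm.2,
    CrW rm.1 (f pq.1) (g pq.2)

/-- Complex conjugation on `C^∞(ℝ²)[[λ]]`, acting coefficientwise (the formal
parameter `λ` is treated as real). -/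
def conjFS (f : FS) : FS := fun n x => starRingEnd ℂ (f n x)

/-- A series in `ℂ[[λ]]` is *nonnegative* if it is real and `≥ 0` in the ordered ring
`ℝ[[λ]]`, i.e. it is zero or its lowest nonvanishing coefficient is positive. -/
def nonnegSeries (c : ℕ → ℂ) : Prop :=
  ∃ p : ℕ → ℝ, (∀ n, c n = (p n : ℂ)) ∧
    ((∀ n, p n = 0) ∨ ∃ n, (∀ m < n, p m = 0) ∧ 0 < p n)

/-- A series in `ℂ[[λ]]` is *negative* if it is real and `< 0` in the ordered ring
`ℝ[[λ]]`, i.e. its lowest nonvanishing coefficient is negative. -/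
def negSeries (c : ℕ → ℂ) : Prop :=
  ∃ p : ℕ → ℝ, (∀ n, c n = (p n : ℂ)) ∧
    ∃ n, (∀ m < n, p m = 0) ∧ p n < 0

/-- The Hamiltonian `H(q,p) = (q² + p²)/2` of the harmonic oscillator. -/
def Hosc : Fn := fun v => ((v.1 ^ 2 + v.2 ^ 2 : ℝ) : ℂ) / 2

/-- `H` as an element of `C^∞(ℝ²)[[λ]]`. -/
def HoscFS : FS := fun n => if n = 0 then Hosc else 0

lemma hosc_eq : Hosc = fun v : ℝ × ℝ => Complex.ofRealCLM ((2:ℝ)⁻¹ * (v.1 * v.1 + v.2 * v.2)) := by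
  funext v; simp [Hosc]; push_cast; ring

lemma hosc_hasFDeriv (x : ℝ × ℝ) : HasFDerivAt Hosc
    (Complex.ofRealCLM.comp ((2:ℝ)⁻¹ • ((x.1 • ContinuousLinearMap.fst ℝ ℝ ℝ + x.1 • ContinuousLinearMap.fst ℝ ℝ ℝ) + (x.2 • ContinuousLinearMap.snd ℝ ℝ ℝ + x.2 • ContinuousLinearMap.snd ℝ ℝ ℝ)))) x := by
  rw [hosc_eq]
  exact Complex.ofRealCLM.hasFDerivAt.comp x
    (((hasFDerivAt_fst.mul hasFDerivAt_fst).add (hasFDerivAt_snd.mul hasFDerivAt_snd)).const_mul _)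

lemma dq_Hosc : dq Hosc = fun x : ℝ × ℝ => (x.1 : ℂ) := by
  funext x
  rw [dq, (hosc_hasFDeriv x).fderiv]
  simp
  ring

lemma dp_Hosc : dp Hosc = fun x : ℝ × ℝ => (x.2 : ℂ) := by
  funext x
  rw [dp, (hosc_hasFDeriv x).fderiv]
  simp
  ring

lemma coord1_eq : (fun x : ℝ × ℝ => (x.1 : ℂ)) = fun x => (Complex.ofRealCLM.comp (ContinuousLinearMap.fst ℝ ℝ ℝ)) x := by
  funext x; simp

lemma coord2_eq : (fun x : ℝ × ℝ => (x.2 : ℂ)) = fun x => (Complex.ofRealCLM.comp (ContinuousLinearMap.snd ℝ ℝ ℝ)) x := by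
  funext x; simp

lemma dq_coord1 : dq (fun x : ℝ × ℝ => (x.1 : ℂ)) = fun _ => 1 := by
  funext x
  rw [dq, coord1_eq, (Complex.ofRealCLM.comp (ContinuousLinearMap.fst ℝ ℝ ℝ)).hasFDerivAt.fderiv]
  simp

lemma dp_coord1 : dp (fun x : ℝ × ℝ => (x.1 : ℂ)) = fun _ => 0 := by
  funext x
  rw [dp, coord1_eq, (Complex.ofRealCLM.comp (ContinuousLinearMap.fst ℝ ℝ ℝ)).hasFDerivAt.fderiv]
  simp

lemma dq_coord2 : dq (fun x : ℝ × ℝ => (x.2 : ℂ)) = fun _ => 0 := by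
  funext x
  rw [dq, coord2_eq, (Complex.ofRealCLM.comp (ContinuousLinearMap.snd ℝ ℝ ℝ)).hasFDerivAt.fderiv]
  simp

lemma dp_coord2 : dp (fun x : ℝ × ℝ => (x.2 : ℂ)) = fun _ => 1 := by
  funext x
  rw [dp, coord2_eq, (Complex.ofRealCLM.comp (ContinuousLinearMap.snd ℝ ℝ ℝ)).hasFDerivAt.fderiv]
  simp

lemma dq_const (c : ℂ) : dq (fun _ => c) = fun _ => 0 := by
  funext x; rw [dq]; simp

lemma dp_const (c : ℂ) : dp (fun _ => c) = fun _ => 0 := by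
  funext x; rw [dp]; simp

lemma dq_zero : dq 0 = 0 := by
  funext x; rw [dq]; show fderiv ℝ (fun _ => (0:ℂ)) x (1,0) = 0; simp

lemma dp_zero : dp 0 = 0 := by
  funext x; rw [dp]; show fderiv ℝ (fun _ => (0:ℂ)) x (0,1) = 0; simp

lemma dq_iter_zero (s : ℕ) : dq^[s] 0 = 0 := Function.iterate_fixed dq_zero s
lemma dp_iter_zero (s : ℕ) : dp^[s] 0 = 0 := Function.iterate_fixed dp_zero s

lemma fun_zero_eq : (fun _ : ℝ × ℝ => (0:ℂ)) = (0 : Fn) := rfl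

lemma dq2_Hosc : dq^[2] Hosc = fun _ => 1 := by
  rw [Function.iterate_succ_apply', Function.iterate_one, dq_Hosc, dq_coord1]

lemma dq3_Hosc (s : ℕ) : dq^[s+3] Hosc = 0 := by
  rw [Function.iterate_add_apply]
  have h3 : dq^[3] Hosc = 0 := by
    rw [show (3:ℕ) = 2 + 1 from rfl, Function.iterate_add_apply, Function.iterate_one,
      dq_Hosc, show (2:ℕ) = 1 + 1 from rfl, Function.iterate_add_apply, Function.iterate_one,
      dq_coord1, dq_const]
    rfl
  rw [h3, dq_iter_zero]

lemma dq_iter_coord2 (s : ℕ) : dq^[s+1] (fun x : ℝ × ℝ => (x.2:ℂ)) = 0 := by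
  rw [Function.iterate_add_apply, Function.iterate_one, dq_coord2, fun_zero_eq, dq_iter_zero]

lemma dq_iter_one (s : ℕ) : dq^[s+1] (fun _ : ℝ × ℝ => (1:ℂ)) = 0 := by
  rw [Function.iterate_add_apply, Function.iterate_one, dq_const, fun_zero_eq, dq_iter_zero]

lemma dp2_Hosc : dp^[2] Hosc = fun _ => 1 := by
  rw [Function.iterate_succ_apply', Function.iterate_one, dp_Hosc, dp_coord2]

lemma dp3_Hosc (t : ℕ) : dp^[t+3] Hosc = 0 := by
  rw [Function.iterate_add_apply]
  have h3 : dp^[3] Hosc = 0 := by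
    rw [show (3:ℕ) = 2 + 1 from rfl, Function.iterate_add_apply, Function.iterate_one,
      dp_Hosc, show (2:ℕ) = 1 + 1 from rfl, Function.iterate_add_apply, Function.iterate_one,
      dp_coord2, dp_const]
    rfl
  rw [h3, dp_iter_zero]

lemma D_eval (s t : ℕ) : dq^[s] (dp^[t] Hosc) (0, 0)
    = if (s = 2 ∧ t = 0) ∨ (s = 0 ∧ t = 2) then 1 else 0 := by
  obtain _ | _ | _ | t := t
  · -- t = 0
    rw [Function.iterate_zero_apply]
    obtain _ | _ | _ | s := s
    · simp [Hosc]
    · rw [Function.iterate_one, dq_Hosc]; norm_num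
    · rw [dq2_Hosc]; norm_num
    · rw [dq3_Hosc]; simp
  · -- t = 1
    rw [Function.iterate_one, dp_Hosc]
    obtain _ | s := s
    · norm_num
    · rw [dq_iter_coord2]; simp
  · -- t = 2
    rw [dp2_Hosc]
    obtain _ | s := s
    · norm_num
    · rw [dq_iter_one]; simp
  · -- t ≥ 3
    rw [dp3_Hosc, dq_iter_zero]; simp

lemma crW_zero_left (r : ℕ) (g : Fn) : CrW r 0 g = 0 := by
  funext x
  show CrW r 0 g x = 0
  unfold CrW
  rw [Finset.sum_eq_zero, mul_zero]
  intro s _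
  rw [dp_iter_zero, dq_iter_zero]
  simp

lemma crW_zero_right (r : ℕ) (f : Fn) : CrW r f 0 = 0 := by
  funext x
  show CrW r f 0 x = 0
  unfold CrW
  rw [Finset.sum_eq_zero, mul_zero]
  intro s _
  rw [dp_iter_zero, dq_iter_zero]
  simp

lemma starW_HH (n : ℕ) (x : ℝ × ℝ) :
    starW HoscFS HoscFS n x = CrW n Hosc Hosc x := by
  unfold starW
  have : ∀ F : ℕ × ℕ → ℂ, (∑ rm ∈ Finset.HasAntidiagonal.antidiagonal n, F rm) = F (n, 0) →
     True := fun _ _ => trivial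
  rw [Finset.sum_eq_single (n, 0)]
  · rw [show (Finset.HasAntidiagonal.antidiagonal (n,0).2) = {(0,0)} from by simp, Finset.sum_singleton]
    simp [HoscFS]
  · intro rm hmem hne
    apply Finset.sum_eq_zero
    intro pq hpq
    rw [Finset.HasAntidiagonal.mem_antidiagonal] at hmem hpq
    have h2 : rm.2 ≠ 0 := by
      intro h
      apply hne
      have := hmem
      rw [h, add_zero] at this
      exact Prod.ext this h
    by_cases h1 : pq.1 = 0
    · have : pq.2 = rm.2 := by omega
      have : HoscFS pq.2 = 0 := by rw [this]; simp [HoscFS, h2]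
      rw [this, crW_zero_right]
    · have : HoscFS pq.1 = 0 := by simp [HoscFS, h1]
      rw [this, crW_zero_left]
  · intro h
    exact absurd (Finset.HasAntidiagonal.mem_antidiagonal.2 (by simp)) h

lemma crW_HH_eval (n : ℕ) :
    CrW n Hosc Hosc (0, 0) = if n = 2 then (-(1:ℂ)/4) else 0 := by
  by_cases hn : n = 2
  · subst hn
    unfold CrW
    rw [Finset.sum_range_succ, Finset.sum_range_succ, Finset.sum_range_one]
    simp only [D_eval]
    norm_num [Nat.factorial, mul_pow, Complex.I_sq]
  · rw [if_neg hn]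
    unfold CrW
    rw [Finset.sum_eq_zero, mul_zero]
    intro s hs
    rw [Finset.mem_range] at hs
    rw [D_eval, if_neg (by omega)]
    ring

lemma conj_HoscFS : conjFS HoscFS = HoscFS := by
  funext n x
  unfold conjFS HoscFS
  split
  · simp [Hosc, map_div₀, Complex.conj_ofReal, map_ofNat]
  · simp

lemma smooth_HoscFS : SmoothFS HoscFS := by
  intro n
  unfold HoscFS
  split
  · rw [hosc_eq]
    exact Complex.ofRealCLM.contDiff.comp
      (contDiff_const.mul ((contDiff_fst.mul contDiff_fst).add (contDiff_snd.mul contDiff_snd)))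
  · exact contDiff_const


/-- For the Weyl star product and the harmonic oscillator
Hamiltonian `H = (q² + p²)/2` one has `δ(conj(H) ⋆_W H) = −λ²/4`, a negative element
of `ℝ[[λ]]`; hence the evaluation functional `δ` at the origin is not a positive
linear functional for `⋆_W`. -/
theorem delta_functional_not_positive :
    -- `δ(conj(H) ⋆_W H) = −λ²/4 …`
    (∀ n : ℕ, starW (conjFS HoscFS) HoscFS n (0, 0)
      = if n = 2 then (-(1 : ℂ) / 4) else 0) ∧
    -- … which is a negative element of `ℝ[[λ]]`,
    negSeries (fun n => starW (conjFS HoscFS) HoscFS n (0, 0)) ∧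
    -- hence `δ` is not a positive linear functional for `⋆_W`
    ¬ (∀ f : FS, SmoothFS f →
        nonnegSeries (fun n => starW (conjFS f) f n (0, 0))) := by
  have h1 : ∀ n : ℕ, starW (conjFS HoscFS) HoscFS n (0, 0)
      = if n = 2 then (-(1 : ℂ) / 4) else 0 := by
    intro n
    rw [conj_HoscFS, starW_HH, crW_HH_eval]
  have h2 : negSeries (fun n => starW (conjFS HoscFS) HoscFS n (0, 0)) := by
    refine ⟨fun n => if n = 2 then (-(1:ℝ)/4) else 0, ?_, 2, ?_, ?_⟩
    · intro n
      show starW (conjFS HoscFS) HoscFS n (0, 0) = _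
      rw [h1]
      split <;> rename_i h <;> simp [h] <;> norm_num
    · intro m hm
      show (if m = 2 then (-(1:ℝ)/4) else 0) = 0
      rw [if_neg (by omega)]
    · show (if 2 = 2 then (-(1:ℝ)/4) else 0) < 0
      norm_num
  refine ⟨h1, h2, ?_⟩
  intro hpos
  obtain ⟨p, hp, n, hzero, hneg⟩ := h2
  obtain ⟨p', hp', hcase⟩ := hpos HoscFS smooth_HoscFS
  have hpp : ∀ k, p k = p' k := by
    intro k
    have : (p k : ℂ) = (p' k : ℂ) := (hp k).symm.trans (hp' k)
    exact_mod_cast this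
  rcases hcase with hall | ⟨m, hm, hposm⟩
  · rw [hpp n, hall n] at hneg; exact lt_irrefl 0 hneg
  · rcases lt_trichotomy n m with h | h | h
    · have := hm n h
      rw [hpp n, this] at hneg
      exact lt_irrefl 0 hneg
    · subst h
      rw [hpp n] at hneg
      exact absurd hposm (not_lt.2 hneg.le)
    · have h0 := hzero m h
      rw [hpp m] at h0
      rw [h0] at hposm
      exact lt_irrefl 0 hposm
end
end

section
/- Let A be a unital associative algebra over a commutative ring containing the rationals, and let ⋆ be an associative unital formal deformation of A, i.e. an associative λ-bilinear product on A[[λ]] with a ⋆ b = ab + O(λ) and with the same unit. Let P₀ ∈ A satisfy P₀² = P₀ for the undeformed product. Then P₀ ⋆ P₀ − P₀ = O(λ), the star square root and its star inverse (1 + 4(P₀ ⋆ P₀ − P₀))^{−1/2} exist in A[[λ]] as the formal binomial series (associated to the analytic function (1+x)^{−1/2}) evaluated with ⋆, and the element P := 1/2 + (P₀ − 1/2) ⋆ (1 + 4(P₀ ⋆ P₀ − P₀))^{−1/2} satisfies P ⋆ P = P and P = P₀ + O(λ). -/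
noncomputable section

/-- The `K[[λ]]`-module structure on `A[[λ]]` for a `K`-algebra `A`: scalars act by
the Cauchy product via the algebra map `K → A` extended to power series. -/
def psSmulK {K : Type*} [CommRing K] {A : Type*} [Ring A] [Algebra K A]
    (z : PowerSeries K) (f : PowerSeries A) : PowerSeries A :=
  PowerSeries.map (algebraMap K A) z * f

/-- Iterated `⋆`-powers `X^{⋆k}` with respect to a product `mult` on `A[[λ]]`. -/
def starPow {A : Type*} [Ring A]
    (mult : PowerSeries A → PowerSeries A → PowerSeries A)
    (X : PowerSeries A) : ℕ → PowerSeries A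
  | 0 => 1
  | k + 1 => mult X (starPow mult X k)

/-- The Taylor coefficients of the analytic function `(1+x)^{-1/2}`:
`bc k = binom(-1/2, k) = (Π_{j<k} (-1/2 - j)) / k!`. -/
def invSqrtCoeff (k : ℕ) : ℚ :=
  (∏ j ∈ Finset.range k, (-(1 : ℚ) / 2 - j)) / (k.factorial : ℚ)

/-!
Make `A⟦λ⟧` a ring under `⋆`. Since `P₀ ⋆ P₀ − P₀ = O(λ)`, the element
`D = 4(P₀ ⋆ P₀ − P₀)` is `λ`-adically small, so every `f ∈ ℚ⟦x⟧` can be evaluated at `D`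
coefficient by coefficient, and `f ↦ f(D)` is a ring homomorphism whose values commute with
everything that commutes with `D`. Evaluating `(1+x)^{-1/2} (1+x)^{-1/2} (1+x) = 1` gives `W`
with `W ⋆ W ⋆ (1 + D) = 1` commuting with `P₀`. As `(P₀ − ½)^{⋆2} = ¼ (1 + D)`, the element
`½ + (P₀ − ½) ⋆ W` squares to `¼ + (P₀ − ½) ⋆ W + ¼`. Square roots with constant term `1` are
unique because `2` is invertible: two of them agree order by order in `λ`.
-/

open PowerSeries

section Trunc

variable {R : Type*} [CommRing R]

lemma X_pow_dvd_sub_trunc (f : R⟦X⟧) (n : ℕ) : X ^ n ∣ f - (trunc n f : R⟦X⟧) :=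
  X_pow_dvd_iff.mpr fun k hk => by
    rw [map_sub, Polynomial.coeff_coe, coeff_trunc, if_pos hk, sub_self]

lemma X_pow_dvd_trunc_sub {k n : ℕ} {f : R⟦X⟧} {p : Polynomial R} (h : X ^ k ∣ f - (p : R⟦X⟧))
    (hkn : k ≤ n) : Polynomial.X ^ k ∣ trunc n f - p :=
  Polynomial.X_pow_dvd_iff.mpr fun d hd => by
    have := X_pow_dvd_iff.mp h d hd
    rw [map_sub, Polynomial.coeff_coe] at this
    rwa [Polynomial.coeff_sub, coeff_trunc, if_pos (hd.trans_le hkn)]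

end Trunc

lemma invSqrtCoeff_eq_choose (k : ℕ) : invSqrtCoeff k = Ring.choose (-1 / 2 : ℚ) k := by
  have h := Ring.descPochhammer_eq_factorial_smul_choose (-1 / 2 : ℚ) k
  rw [← Polynomial.aeval_eq_smeval, Polynomial.aeval_def, Polynomial.eval₂_eq_eval_map,
    descPochhammer_map, descPochhammer_eval_eq_prod_range, nsmul_eq_mul] at h
  rw [invSqrtCoeff, div_eq_iff (by positivity), h, mul_comm, neg_div]

lemma binomialSeries_neg_half_mul_self_mul_one_add_X :
    PowerSeries.binomialSeries ℚ (-1 / 2 : ℚ) * PowerSeries.binomialSeries ℚ (-1 / 2 : ℚ)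
      * (1 + X) = 1 := by
  have h1 : (1 + X : ℚ⟦X⟧) = PowerSeries.binomialSeries ℚ ((1 : ℕ) : ℚ) := by
    rw [PowerSeries.binomialSeries_nat, pow_one]
  rw [h1, ← PowerSeries.binomialSeries_add, ← PowerSeries.binomialSeries_add]
  norm_num

lemma eq_zero_of_add_self_eq_zero (K : Type*) {A : Type*} [CommRing K] [Algebra ℚ K] [Ring A]
    [Algebra K A] {a : A} (h : a + a = 0) : a = 0 := by
  have : algebraMap K A (algebraMap ℚ K (1 / 2)) * (a + a) = a := by
    rw [mul_add, ← add_mul, ← map_add, ← map_add, add_halves, map_one, map_one, one_mul]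
  rwa [h, mul_zero, eq_comm] at this

theorem isIdempotentElem_half_add_sub_half_mul {R : Type*} [Ring R] [Algebra ℚ R] {p w : R}
    (hpw : Commute p w) (hw : w * w * (1 + 4 • (p * p - p)) = 1) :
    IsIdempotentElem (algebraMap ℚ R (1 / 2) + (p - algebraMap ℚ R (1 / 2)) * w) := by
  rw [Algebra.algebraMap_eq_smul_one]
  set u := 1 + 4 • (p * p - p)
  set q := p - (1 / 2 : ℚ) • (1 : R)
  have hqw : Commute q w := hpw.sub_left ((Commute.one_left w).smul_left _)
  have huw : Commute u w :=
    (Commute.one_left w).add_left (((hpw.mul_left hpw).sub_left hpw).smul_left 4)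
  have hqq : q * q = (1 / 4 : ℚ) • u := by
    simp only [q, u, sub_mul, mul_sub, smul_mul_assoc, mul_smul_comm, one_mul, mul_one, smul_sub,
      smul_add, smul_smul, ← Nat.cast_smul_eq_nsmul ℚ]
    module
  have hqwqw : q * w * (q * w) = (1 / 4 : ℚ) • 1 := by
    rw [mul_assoc, ← mul_assoc w, ← hqw.eq, mul_assoc, ← mul_assoc, hqq, smul_mul_assoc,
      (huw.mul_right huw).eq, hw]
  unfold IsIdempotentElem
  rw [add_mul, mul_add, mul_add, hqwqw]
  simp only [smul_mul_assoc, mul_smul_comm, one_mul, mul_one]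
  module

structure FormalDeformation (K A : Type*) [CommRing K] [Ring A] [Algebra K A] where
  mul : A⟦X⟧ → A⟦X⟧ → A⟦X⟧
  add_left : ∀ f g h, mul (f + g) h = mul f h + mul g h
  add_right : ∀ f g h, mul f (g + h) = mul f g + mul f h
  smul_left : ∀ (z : K⟦X⟧) f g, mul (psSmulK z f) g = psSmulK z (mul f g)
  smul_right : ∀ (z : K⟦X⟧) f g, mul f (psSmulK z g) = psSmulK z (mul f g)
  assoc : ∀ f g h, mul (mul f g) h = mul f (mul g h)
  one_left : ∀ f, mul 1 f = f
  one_right : ∀ f, mul f 1 = f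
  coeff_zero : ∀ f g, coeff 0 (mul f g) = coeff 0 f * coeff 0 g

namespace FormalDeformation

variable {K A : Type*} [CommRing K] [Ring A] [Algebra K A] {m : FormalDeformation K A}

/-- `A⟦λ⟧` with `⋆` as multiplication, kept apart from `A⟦X⟧` and its Cauchy product. -/
structure Alg (m : FormalDeformation K A) where
  ofPS ::
  toPS : A⟦X⟧

namespace Alg

variable (m) in
def equivPS : m.Alg ≃ A⟦X⟧ := ⟨toPS, ofPS, fun _ => rfl, fun _ => rfl⟩

@[ext] lemma ext {x y : m.Alg} (h : x.toPS = y.toPS) : x = y := congrArg ofPS h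

instance : AddCommGroup m.Alg := (equivPS m).addCommGroup

instance : Ring m.Alg :=
  { (inferInstance : AddCommGroup m.Alg) with
    mul := fun x y => ofPS (m.mul x.toPS y.toPS)
    mul_assoc := fun x y z => congrArg ofPS (m.assoc _ _ _)
    one := ofPS 1
    one_mul := fun x => congrArg ofPS (m.one_left _)
    mul_one := fun x => congrArg ofPS (m.one_right _)
    left_distrib := fun x y z => congrArg ofPS (m.add_right _ _ _)
    right_distrib := fun x y z => congrArg ofPS (m.add_left _ _ _)
    zero_mul := fun x => congrArg ofPS <| show m.mul 0 x.toPS = 0 by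
      simpa using m.add_left 0 0 x.toPS
    mul_zero := fun x => congrArg ofPS <| show m.mul x.toPS 0 = 0 by
      simpa using m.add_right x.toPS 0 0 }

@[simp] lemma toPS_add (x y : m.Alg) : (x + y).toPS = x.toPS + y.toPS := rfl
@[simp] lemma toPS_sub (x y : m.Alg) : (x - y).toPS = x.toPS - y.toPS := rfl
@[simp] lemma toPS_mul (x y : m.Alg) : (x * y).toPS = m.mul x.toPS y.toPS := rfl
@[simp] lemma toPS_one : (1 : m.Alg).toPS = 1 := rfl
@[simp] lemma toPS_zero : (0 : m.Alg).toPS = 0 := rfl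

lemma toPS_sum {ι : Type*} (s : Finset ι) (x : ι → m.Alg) :
    (∑ i ∈ s, x i).toPS = ∑ i ∈ s, (x i).toPS :=
  map_sum (AddMonoidHom.mk' toPS toPS_add) x s

lemma toPS_pow (x : m.Alg) (k : ℕ) : (x ^ k).toPS = starPow m.mul x.toPS k := by
  induction k with
  | zero => rfl
  | succ k ih => rw [pow_succ', toPS_mul, ih]; rfl

end Alg

lemma mul_map_left (z : K⟦X⟧) (f : A⟦X⟧) :
    m.mul (map (algebraMap K A) z) f = map (algebraMap K A) z * f := by
  simpa [psSmulK, m.one_left] using m.smul_left z 1 f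

lemma mul_map_right (z : K⟦X⟧) (f : A⟦X⟧) :
    m.mul f (map (algebraMap K A) z) = map (algebraMap K A) z * f := by
  simpa [psSmulK, m.one_right] using m.smul_right z f 1

open Alg

instance : Algebra K⟦X⟧ m.Alg := RingHom.toAlgebra'
  { toFun := fun z => ofPS (map (algebraMap K A) z)
    map_one' := by ext1; simp
    map_mul' := fun z w => by ext1; simp [mul_map_left]
    map_zero' := by ext1; simp
    map_add' := fun z w => by ext1; simp }
  fun z x => by ext1; simp [mul_map_left, mul_map_right]

lemma toPS_algebraMap_mul (z : K⟦X⟧) (x : m.Alg) :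
    (algebraMap K⟦X⟧ m.Alg z * x).toPS = map (algebraMap K A) z * x.toPS :=
  mul_map_left z x.toPS

lemma X_pow_dvd_toPS_iff {n : ℕ} {x : m.Alg} :
    X ^ n ∣ x.toPS ↔ ∃ y, x = algebraMap K⟦X⟧ m.Alg (X ^ n) * y := by
  constructor
  · rintro ⟨y, hy⟩
    exact ⟨ofPS y, by ext1; rw [toPS_algebraMap_mul, map_pow, map_X, ← hy]⟩
  · rintro ⟨y, rfl⟩
    rw [toPS_algebraMap_mul, map_pow, map_X]
    exact dvd_mul_right _ _

variable (m) in
def filtration (n : ℕ) : TwoSidedIdeal m.Alg :=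
  TwoSidedIdeal.mk' {x | X ^ n ∣ x.toPS} (dvd_zero _) dvd_add dvd_neg.mpr
    (fun {x y} hy => by
      obtain ⟨y, rfl⟩ := X_pow_dvd_toPS_iff.mp hy
      exact X_pow_dvd_toPS_iff.mpr ⟨x * y, Algebra.left_comm _ _ _⟩)
    (fun {x y} hx => by
      obtain ⟨x, rfl⟩ := X_pow_dvd_toPS_iff.mp hx
      exact X_pow_dvd_toPS_iff.mpr ⟨x * y, mul_assoc _ _ _⟩)

lemma mem_filtration {n : ℕ} {x : m.Alg} : x ∈ m.filtration n ↔ X ^ n ∣ x.toPS :=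
  TwoSidedIdeal.mem_mk' _ _ _ _ _ _ _

lemma mem_filtration_zero (x : m.Alg) : x ∈ m.filtration 0 :=
  mem_filtration.mpr (by rw [pow_zero]; exact one_dvd _)

lemma mul_mem_filtration {a b : ℕ} {x y : m.Alg} (hx : x ∈ m.filtration a)
    (hy : y ∈ m.filtration b) : x * y ∈ m.filtration (a + b) := by
  obtain ⟨x, rfl⟩ := X_pow_dvd_toPS_iff.mp (mem_filtration.mp hx)
  obtain ⟨y, rfl⟩ := X_pow_dvd_toPS_iff.mp (mem_filtration.mp hy)
  refine mem_filtration.mpr (X_pow_dvd_toPS_iff.mpr ⟨x * y, ?_⟩)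
  rw [pow_add, map_mul, mul_assoc, Algebra.left_comm x, mul_assoc]

lemma pow_mem_filtration {x : m.Alg} (hx : x ∈ m.filtration 1) (n : ℕ) :
    x ^ n ∈ m.filtration n := by
  induction n with
  | zero => exact mem_filtration_zero _
  | succ n ih => rw [pow_succ]; exact mul_mem_filtration ih hx

lemma eq_of_forall_sub_mem_filtration {x y : m.Alg} (h : ∀ n, x - y ∈ m.filtration n) :
    x = y := by
  ext1; ext n
  simpa [sub_eq_zero] using
    X_pow_dvd_iff.mp (mem_filtration.mp (h (n + 1))) n n.lt_succ_self

lemma coeff_toPS_mul_of_mem_filtration_left {n : ℕ} {x : m.Alg} (hx : x ∈ m.filtration n)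
    (y : m.Alg) : coeff n (x * y).toPS = coeff n x.toPS * coeff 0 y.toPS := by
  obtain ⟨x, rfl⟩ := X_pow_dvd_toPS_iff.mp (mem_filtration.mp hx)
  rw [mul_assoc, toPS_algebraMap_mul, toPS_algebraMap_mul, map_pow, map_X, coeff_X_pow_mul',
    coeff_X_pow_mul', if_pos le_rfl, if_pos le_rfl, Nat.sub_self]
  exact m.coeff_zero _ _

lemma coeff_toPS_mul_of_mem_filtration_right {n : ℕ} {y : m.Alg} (hy : y ∈ m.filtration n)
    (x : m.Alg) : coeff n (x * y).toPS = coeff 0 x.toPS * coeff n y.toPS := by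
  obtain ⟨y, rfl⟩ := X_pow_dvd_toPS_iff.mp (mem_filtration.mp hy)
  rw [Algebra.left_comm, toPS_algebraMap_mul, toPS_algebraMap_mul, map_pow, map_X, coeff_X_pow_mul',
    coeff_X_pow_mul', if_pos le_rfl, if_pos le_rfl, Nat.sub_self]
  exact m.coeff_zero _ _

variable [Algebra ℚ K]

instance : Algebra ℚ m.Alg := Algebra.compHom m.Alg (algebraMap ℚ K⟦X⟧)

lemma toPS_algebraMap_rat_mul (q : ℚ) (x : m.Alg) :
    (algebraMap ℚ m.Alg q * x).toPS = psSmulK (C (algebraMap ℚ K q)) x.toPS := by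
  rw [psSmulK, ← PowerSeries.algebraMap_apply, ← toPS_algebraMap_mul]
  rfl

lemma toPS_algebraMap_rat (q : ℚ) :
    (algebraMap ℚ m.Alg q).toPS = C (algebraMap K A (algebraMap ℚ K q)) := by
  rw [← mul_one (algebraMap ℚ m.Alg q), toPS_algebraMap_rat_mul, psSmulK, toPS_one, mul_one,
    map_C]

lemma eq_of_mul_self_eq_mul_self {x y : m.Alg} (hx : coeff 0 x.toPS = 1)
    (hy : coeff 0 y.toPS = 1) (h : x * x = y * y) : x = y := by
  refine eq_of_forall_sub_mem_filtration fun n => ?_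
  induction n with
  | zero => exact mem_filtration_zero _
  | succ n ih =>
    -- the `n`-th coefficient of `x * x - y * y` is `2 (x - y)ₙ`, and `2` is invertible
    have hsq : (x - y) * x + y * (x - y) = 0 := by rw [← sub_eq_zero.mpr h]; noncomm_ring
    have hn : coeff n (x - y).toPS + coeff n (x - y).toPS = 0 := by
      have := congrArg (fun z : m.Alg => coeff n z.toPS) hsq
      rwa [toPS_add, map_add, coeff_toPS_mul_of_mem_filtration_left ih,
        coeff_toPS_mul_of_mem_filtration_right ih, hx, hy, mul_one, one_mul] at this
    refine mem_filtration.mpr (X_pow_dvd_iff.mpr fun k hk => ?_)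
    rcases Nat.lt_succ_iff_lt_or_eq.mp hk with hk | rfl
    · exact X_pow_dvd_iff.mp (mem_filtration.mp ih) k hk
    · exact eq_zero_of_add_self_eq_zero K hn

open Polynomial (aeval)

section Eval

variable (D : m.Alg)

/-- For `D = O(λ)` the partial sums `∑_{k < N} f_k D^k` agree up to `O(λ^(n+1))` once `N > n`,
so `f(D)` is defined coefficientwise by them. -/
def eval (f : ℚ⟦X⟧) : m.Alg :=
  ofPS (PowerSeries.mk fun n => coeff n (aeval D (trunc (n + 1) f)).toPS)

lemma coeff_toPS_eval (f : ℚ⟦X⟧) (n : ℕ) :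
    coeff n (eval D f).toPS = coeff n (aeval D (trunc (n + 1) f)).toPS := by
  simp only [eval, coeff_mk]

lemma coeff_zero_toPS_eval (f : ℚ⟦X⟧) :
    coeff 0 (eval D f).toPS = algebraMap K A (algebraMap ℚ K (constantCoeff f)) := by
  rw [coeff_toPS_eval, trunc_one_left, Polynomial.aeval_C, toPS_algebraMap_rat, coeff_zero_C,
    coeff_zero_eq_constantCoeff_apply]

lemma toPS_aeval_trunc (f : ℚ⟦X⟧) (n : ℕ) :
    (aeval D (trunc n f)).toPS = ∑ k ∈ Finset.range n,
      psSmulK (C (algebraMap ℚ K (coeff k f))) (starPow m.mul D.toPS k) := by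
  rw [Polynomial.aeval_def, eval₂_trunc_eq_sum_range, toPS_sum]
  refine Finset.sum_congr rfl fun k _ => ?_
  rw [toPS_algebraMap_rat_mul, toPS_pow]

variable {D} (hD : D ∈ m.filtration 1)
include hD

lemma aeval_mem_filtration {n : ℕ} {p : Polynomial ℚ} (hp : Polynomial.X ^ n ∣ p) :
    aeval D p ∈ m.filtration n := by
  obtain ⟨q, rfl⟩ := hp
  rw [map_mul, map_pow, Polynomial.aeval_X]
  exact TwoSidedIdeal.mul_mem_right _ _ _ (pow_mem_filtration hD n)

lemma eval_sub_aeval_trunc_mem_filtration (f : ℚ⟦X⟧) (n : ℕ) :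
    eval D f - aeval D (trunc n f) ∈ m.filtration n := by
  refine mem_filtration.mpr (X_pow_dvd_iff.mpr fun k hk => ?_)
  have hdiff : aeval D (trunc (k + 1) f - trunc n f) ∈ m.filtration (k + 1) :=
    aeval_mem_filtration hD <| X_pow_dvd_trunc_sub
      ((pow_dvd_pow X hk).trans (X_pow_dvd_sub_trunc f n)) le_rfl
  have := X_pow_dvd_iff.mp (mem_filtration.mp hdiff) k k.lt_succ_self
  rwa [map_sub, toPS_sub, map_sub, ← coeff_toPS_eval] at this

lemma eval_sub_aeval_mem_filtration {n : ℕ} {f : ℚ⟦X⟧} {p : Polynomial ℚ}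
    (h : X ^ n ∣ f - (p : ℚ⟦X⟧)) :
    eval D f - aeval D p ∈ m.filtration n := by
  have := TwoSidedIdeal.add_mem _ (eval_sub_aeval_trunc_mem_filtration hD f n)
    (aeval_mem_filtration hD (X_pow_dvd_trunc_sub h le_rfl))
  rwa [map_sub, sub_add_sub_cancel] at this

lemma eq_eval_of_forall {x : m.Alg} {f : ℚ⟦X⟧}
    (h : ∀ n, ∃ p : Polynomial ℚ, X ^ n ∣ f - (p : ℚ⟦X⟧) ∧ x - aeval D p ∈ m.filtration n) :
    x = eval D f :=
  eq_of_forall_sub_mem_filtration fun n => by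
    obtain ⟨p, hfp, hxp⟩ := h n
    have := TwoSidedIdeal.sub_mem _ hxp (eval_sub_aeval_mem_filtration hD hfp)
    rwa [sub_sub_sub_cancel_right] at this

lemma eval_one : eval D 1 = 1 :=
  (eq_eval_of_forall hD fun _ => ⟨1, by simp, by simp⟩).symm

lemma eval_zero : eval D 0 = 0 :=
  (eq_eval_of_forall hD fun _ => ⟨0, by simp, by simp⟩).symm

lemma eval_X : eval D X = D :=
  (eq_eval_of_forall hD fun _ => ⟨Polynomial.X, by simp, by simp⟩).symm

lemma eval_add (f g : ℚ⟦X⟧) : eval D (f + g) = eval D f + eval D g := by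
  refine (eq_eval_of_forall hD fun n => ⟨trunc n f + trunc n g, ?_, ?_⟩).symm
  · rw [Polynomial.coe_add, add_sub_add_comm]
    exact dvd_add (X_pow_dvd_sub_trunc f n) (X_pow_dvd_sub_trunc g n)
  · rw [map_add, add_sub_add_comm]
    exact TwoSidedIdeal.add_mem _ (eval_sub_aeval_trunc_mem_filtration hD f n)
      (eval_sub_aeval_trunc_mem_filtration hD g n)

lemma eval_mul (f g : ℚ⟦X⟧) : eval D (f * g) = eval D f * eval D g := by
  refine (eq_eval_of_forall hD fun n => ⟨trunc n f * trunc n g, ?_, ?_⟩).symm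
  · have e : f * g - ↑(trunc n f * trunc n g)
        = (f - trunc n f) * g + trunc n f * (g - trunc n g) := by
      rw [Polynomial.coe_mul]; ring
    rw [e]
    exact dvd_add (dvd_mul_of_dvd_left (X_pow_dvd_sub_trunc f n) g)
      (dvd_mul_of_dvd_right (X_pow_dvd_sub_trunc g n) _)
  · have e : eval D f * eval D g - aeval D (trunc n f * trunc n g)
        = (eval D f - aeval D (trunc n f)) * eval D g
          + aeval D (trunc n f) * (eval D g - aeval D (trunc n g)) := by
      rw [map_mul]; noncomm_ring
    rw [e]
    exact TwoSidedIdeal.add_mem _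
      (TwoSidedIdeal.mul_mem_right _ _ _ (eval_sub_aeval_trunc_mem_filtration hD f n))
      (TwoSidedIdeal.mul_mem_left _ _ _ (eval_sub_aeval_trunc_mem_filtration hD g n))

def evalRingHom : ℚ⟦X⟧ →+* m.Alg where
  toFun := eval D
  map_one' := eval_one hD
  map_mul' := eval_mul hD
  map_zero' := eval_zero hD
  map_add' := eval_add hD

lemma evalRingHom_apply (f : ℚ⟦X⟧) : evalRingHom hD f = eval D f := rfl

lemma commute_eval {Z : m.Alg} (hZ : Commute Z D) (f : ℚ⟦X⟧) : Commute Z (eval D f) := by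
  have hZp : ∀ p : Polynomial ℚ, Commute Z (aeval D p) := fun p => by
    induction p using Polynomial.induction_on' with
    | add p q hp hq => rw [map_add]; exact hp.add_right hq
    | monomial k c =>
      rw [Polynomial.aeval_monomial]
      exact (Algebra.commute_algebraMap_left c Z).symm.mul_right (hZ.pow_right k)
  refine sub_eq_zero.mp (eq_of_forall_sub_mem_filtration fun n => ?_)
  have hmem := eval_sub_aeval_trunc_mem_filtration hD f n
  have e : Z * eval D f - eval D f * Z - 0
      = Z * (eval D f - aeval D (trunc n f)) - (eval D f - aeval D (trunc n f)) * Z := by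
    rw [sub_zero, mul_sub, sub_mul, (hZp _).eq]; abel
  rw [e]
  exact TwoSidedIdeal.sub_mem _ (TwoSidedIdeal.mul_mem_left _ _ _ hmem)
    (TwoSidedIdeal.mul_mem_right _ _ _ hmem)

end Eval

section InvSqrt

variable {D : m.Alg}

lemma coeff_zero_toPS_eval_binomialSeries (r : ℚ) :
    coeff 0 (eval D (PowerSeries.binomialSeries ℚ r)).toPS = 1 := by
  rw [coeff_zero_toPS_eval, PowerSeries.binomialSeries_constantCoeff, map_one, map_one]

variable (hD : D ∈ m.filtration 1)
include hD

lemma eval_binomialSeries_neg_half_mul_self_mul_one_add :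
    eval D (PowerSeries.binomialSeries ℚ (-1 / 2 : ℚ))
      * eval D (PowerSeries.binomialSeries ℚ (-1 / 2 : ℚ)) * (1 + D) = 1 := by
  simpa only [map_mul, map_add, map_one, evalRingHom_apply, eval_X hD, eval_one hD] using
    congrArg (evalRingHom hD) binomialSeries_neg_half_mul_self_mul_one_add_X

lemma eq_eval_binomialSeries_neg_half {x : m.Alg} (hx0 : coeff 0 x.toPS = 1)
    (hx : x * x * (1 + D) = 1) : x = eval D (PowerSeries.binomialSeries ℚ (-1 / 2 : ℚ)) := by
  set w := eval D (PowerSeries.binomialSeries ℚ (-1 / 2 : ℚ))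
  have hw : Commute (1 + D) w := commute_eval hD ((Commute.one_left D).add_left (.refl D)) _
  refine eq_of_mul_self_eq_mul_self hx0 (coeff_zero_toPS_eval_binomialSeries _) ?_
  calc x * x = x * x * ((1 + D) * (w * w)) := by
        rw [(hw.mul_right hw).eq, eval_binomialSeries_neg_half_mul_self_mul_one_add hD, mul_one]
    _ = w * w := by rw [← mul_assoc, hx, one_mul]

end InvSqrt

end FormalDeformation

/-- Let `A` be a unital associative algebra over a commutative ring
`K ⊇ ℚ` and `⋆` an associative unital `λ`-bilinear formal deformation of `A`.  If
`P₀ ∈ A` is an idempotent for the undeformed product, then `P₀ ⋆ P₀ − P₀ = O(λ)`,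
the `⋆`-inverse `⋆`-square root `W = (1 + 4(P₀ ⋆ P₀ − P₀))^{-1/2}` exists (uniquely,
of the form `1 + O(λ)`) in `A[[λ]]` and is given by the formal binomial series
evaluated with `⋆`, and `P := 1/2 + (P₀ − 1/2) ⋆ W` satisfies `P ⋆ P = P` and
`P = P₀ + O(λ)`. -/
theorem deformation_of_projections
    (K : Type*) [CommRing K] [Algebra ℚ K]
    (A : Type*) [Ring A] [Algebra K A]
    (mult : PowerSeries A → PowerSeries A → PowerSeries A)
    -- `⋆` is `λ`-bilinear
    (hadd_l : ∀ f g h : PowerSeries A, mult (f + g) h = mult f h + mult g h)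
    (hadd_r : ∀ f g h : PowerSeries A, mult f (g + h) = mult f g + mult f h)
    (hsmul_l : ∀ (z : PowerSeries K) (f g : PowerSeries A),
      mult (psSmulK z f) g = psSmulK z (mult f g))
    (hsmul_r : ∀ (z : PowerSeries K) (f g : PowerSeries A),
      mult f (psSmulK z g) = psSmulK z (mult f g))
    -- `⋆` is associative and unital with the same unit
    (hassoc : ∀ f g h : PowerSeries A, mult (mult f g) h = mult f (mult g h))
    (hone_l : ∀ f : PowerSeries A, mult 1 f = f)
    (hone_r : ∀ f : PowerSeries A, mult f 1 = f)
    -- `⋆` deforms the product of `A`: `a ⋆ b = ab + O(λ)`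
    (hdeform : ∀ f g : PowerSeries A,
      PowerSeries.coeff 0 (mult f g)
        = PowerSeries.coeff 0 f * PowerSeries.coeff 0 g)
    -- `P₀` is an idempotent of the undeformed product
    (P₀ : A) (hidem : P₀ * P₀ = P₀) :
    -- `P₀ ⋆ P₀ − P₀ = O(λ)`
    PowerSeries.coeff 0
        (mult (PowerSeries.C P₀) (PowerSeries.C P₀) - PowerSeries.C P₀) = 0 ∧
    -- the `⋆`-inverse `⋆`-square root `W = (1 + 4(P₀ ⋆ P₀ − P₀))^{-1/2}` exists, …
    ∃ W : PowerSeries A,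
      (PowerSeries.coeff 0 W = 1 ∧
        mult (mult W W)
          (1 + 4 • (mult (PowerSeries.C P₀) (PowerSeries.C P₀)
            - PowerSeries.C P₀)) = 1) ∧
      -- … is unique of the form `1 + O(λ)`, …
      (∀ W' : PowerSeries A, PowerSeries.coeff 0 W' = 1 →
        mult (mult W' W')
          (1 + 4 • (mult (PowerSeries.C P₀) (PowerSeries.C P₀)
            - PowerSeries.C P₀)) = 1 → W' = W) ∧
      -- … is given by the formal binomial series of `(1+x)^{-1/2}` evaluated with `⋆`,
      (∀ n : ℕ, PowerSeries.coeff n W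
        = PowerSeries.coeff n (∑ k ∈ Finset.range (n + 1),
            psSmulK (PowerSeries.C (algebraMap ℚ K (invSqrtCoeff k)))
              (starPow mult
                (4 • (mult (PowerSeries.C P₀) (PowerSeries.C P₀)
                  - PowerSeries.C P₀)) k))) ∧
      -- and `P := 1/2 + (P₀ − 1/2) ⋆ W` is a `⋆`-idempotent with `P = P₀ + O(λ)`.
      (mult
          (PowerSeries.C (algebraMap K A (algebraMap ℚ K (1 / 2)))
            + mult (PowerSeries.C P₀
                - PowerSeries.C (algebraMap K A (algebraMap ℚ K (1 / 2)))) W)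
          (PowerSeries.C (algebraMap K A (algebraMap ℚ K (1 / 2)))
            + mult (PowerSeries.C P₀
                - PowerSeries.C (algebraMap K A (algebraMap ℚ K (1 / 2)))) W)
        = PowerSeries.C (algebraMap K A (algebraMap ℚ K (1 / 2)))
            + mult (PowerSeries.C P₀
                - PowerSeries.C (algebraMap K A (algebraMap ℚ K (1 / 2)))) W) ∧
      (PowerSeries.coeff 0
          (PowerSeries.C (algebraMap K A (algebraMap ℚ K (1 / 2)))
            + mult (PowerSeries.C P₀
                - PowerSeries.C (algebraMap K A (algebraMap ℚ K (1 / 2)))) W)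
        = P₀) := by
  let m : FormalDeformation K A :=
    ⟨mult, hadd_l, hadd_r, hsmul_l, hsmul_r, hassoc, hone_l, hone_r, hdeform⟩
  let P : m.Alg := .ofPS (PowerSeries.C P₀)
  let D : m.Alg := 4 • (P * P - P)
  let W := FormalDeformation.eval D (PowerSeries.binomialSeries ℚ (-1 / 2 : ℚ))
  have hsmall : PowerSeries.coeff 0
      (mult (PowerSeries.C P₀) (PowerSeries.C P₀) - PowerSeries.C P₀) = 0 := by
    rw [map_sub, hdeform, coeff_zero_C, hidem, sub_self]
  have hD : D ∈ m.filtration 1 := by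
    rw [FormalDeformation.mem_filtration, pow_one, X_dvd_iff, ← coeff_zero_eq_constantCoeff_apply]
    change PowerSeries.coeff 0 (4 • (mult (PowerSeries.C P₀) (PowerSeries.C P₀)
      - PowerSeries.C P₀)) = 0
    rw [map_nsmul, hsmall, smul_zero]
  have hW0 := FormalDeformation.coeff_zero_toPS_eval_binomialSeries (D := D) (-1 / 2)
  have hWW := FormalDeformation.eval_binomialSeries_neg_half_mul_self_mul_one_add hD
  have hPD : Commute P D :=
    (((Commute.refl P).mul_right (.refl P)).sub_right (.refl P)).smul_right 4
  have hhalf : algebraMap ℚ m.Alg (1 / 2)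
      = .ofPS (PowerSeries.C (algebraMap K A (algebraMap ℚ K (1 / 2)))) :=
    FormalDeformation.Alg.ext (FormalDeformation.toPS_algebraMap_rat _)
  have hP := isIdempotentElem_half_add_sub_half_mul (FormalDeformation.commute_eval hD hPD _) hWW
  rw [hhalf] at hP
  refine ⟨hsmall, W.toPS, ⟨hW0, congrArg (·.toPS) hWW⟩,
    fun W' hW'0 hW' => congrArg (·.toPS) (FormalDeformation.eq_eval_binomialSeries_neg_half hD
      (x := .ofPS W') hW'0 (FormalDeformation.Alg.ext hW')),
    fun n => ?_, congrArg (·.toPS) hP, ?_⟩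
  · rw [FormalDeformation.coeff_toPS_eval, FormalDeformation.toPS_aeval_trunc]
    simp only [PowerSeries.binomialSeries_coeff, smul_eq_mul, mul_one, invSqrtCoeff_eq_choose]
    rfl
  · rw [map_add, hdeform, hW0, mul_one, map_sub, add_sub_cancel, coeff_zero_C]
end
end
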